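/- arXiv:1110.1667 — 8 statements merged into one kernel-verified Lean document; each statement's English description precedes it below -/
import Mathlib

section
/- Let α, β, α', β' ∈ F and λ, λ' ∈ F* with λ ≠ λ', Tr(αβ) = 1 and Tr(α'β') = 1. Set α⊕α' = (αλ + α'λ')/(λ + λ') and β⊕β' = (βλ + β'λ')/(λ + λ'). If Tr((α⊕α')(β⊕β')) = 1, then the three point sets F_{α,β,λ}, F_{α',β',λ'} and F_{α⊕α', β⊕β', λ+λ'} are pairwise disjoint. -/
/-!
A common point of `F_{a,b,μ}` and `F_{c,d,ν}` satisfies `ν Q₁ + μ Q₂ = 0`, where the `z²` terms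
cancel in characteristic 2, leaving `A x² + x y + B y² = 0` with `(μ + ν) A = a ν + c μ` and
`(μ + ν) B = b ν + d μ`. When `Tr (A B) = 1` this binary form is anisotropic: a zero with `y ≠ 0`
gives `u = A x / y` with `u² + u = A B`, and `Tr (u² + u) = 0` since the trace is Frobenius
invariant. So `x = y = 0`, and then `z = 0`.

For the pair `λ, λ'` one has `A B = α β + α' β' + (α⊕α') (β⊕β')`, of trace `1 + 1 + 1 = 1`.
The other two pairs reduce to this one:
`λ Q_{α,β,λ} + λ' Q_{α',β',λ'} + (λ + λ') Q_{α⊕α',β⊕β',λ+λ'}` vanishes identically, so a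
common point of two of the three conics lies on the third as well.
-/

open Projectivization

noncomputable section

abbrev F (h : ℕ) : Type := GaloisField 2 h

def Tr {h : ℕ} (x : F h) : ZMod 2 := Algebra.trace (ZMod 2) (F h) x

abbrev Pt (h : ℕ) := Projectivization (F h) (Fin 3 → F h)

/-- The point set of the conic `F_{α,β,λ} = {(x,y,z) : αx² + xy + βy² + λz² = 0}`.
(The defining condition is invariant under rescaling of a representative vector,
so testing it on the fixed representative `P.rep` is equivalent.) -/
def conic {h : ℕ} (α β lam : F h) : Set (Pt h) :=
  {P | α * P.rep 0 ^ 2 + P.rep 0 * P.rep 1 + β * P.rep 1 ^ 2 + lam * P.rep 2 ^ 2 = 0}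

theorem Algebra.trace_pow_card {K L : Type*} [Field K] [Fintype K] [Field L] [Algebra K L]
    [Algebra.IsAlgebraic K L] (x : L) :
    Algebra.trace K L (x ^ Fintype.card K) = Algebra.trace K L x :=
  Algebra.trace_eq_of_algEquiv (FiniteField.frobeniusAlgEquivOfAlgebraic K L) x

section

variable {L : Type*} [Field L] [Algebra (ZMod 2) L] [Algebra.IsAlgebraic (ZMod 2) L]

theorem trace_sq_add_self (x : L) : Algebra.trace (ZMod 2) L (x ^ 2 + x) = 0 := by
  have : CharP L 2 := charP_of_injective_algebraMap' (ZMod 2) 2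
  have h := Algebra.trace_pow_card (K := ZMod 2) x
  rw [ZMod.card] at h
  rw [map_add, h, CharTwo.add_self_eq_zero]

theorem eq_zero_of_trace_mul_eq_one {a b x y : L} (hab : Algebra.trace (ZMod 2) L (a * b) = 1)
    (hxy : a * x ^ 2 + x * y + b * y ^ 2 = 0) : x = 0 ∧ y = 0 := by
  have : CharP L 2 := charP_of_injective_algebraMap' (ZMod 2) 2
  have hy : y = 0 := by
    by_contra hy
    have hu : (a * x / y) ^ 2 + a * x / y = a * b := by
      field_simp
      linear_combination (-a) * hxy + (a * x * y + a ^ 2 * x ^ 2) * CharTwo.two_eq_zero (R := L)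
    rw [← hu, trace_sq_add_self] at hab
    exact zero_ne_one hab
  subst hy
  have ha : a ≠ 0 := by rintro rfl; simp at hab
  refine ⟨pow_eq_zero_iff two_ne_zero |>.1 ((mul_eq_zero.1 ?_).resolve_left ha), rfl⟩
  simpa using hxy

end

theorem CharTwo.swapped_weighted_means_mul {K : Type*} [Field K] [CharP K 2] {l₁ l₂ : K}
    (a₁ b₁ a₂ b₂ : K) (hl : l₁ + l₂ ≠ 0) :
    (a₁ * l₂ + a₂ * l₁) / (l₁ + l₂) * ((b₁ * l₂ + b₂ * l₁) / (l₁ + l₂)) =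
      a₁ * b₁ + a₂ * b₂ + (a₁ * l₁ + a₂ * l₂) / (l₁ + l₂) * ((b₁ * l₁ + b₂ * l₂) / (l₁ + l₂)) := by
  field_simp
  linear_combination -(l₁ + l₂) * (a₁ * b₁ * l₁ + a₂ * b₂ * l₂) * CharTwo.two_eq_zero (R := K)

section Conics

variable {h : ℕ}

lemma Tr_add (x y : F h) : Tr (x + y) = Tr x + Tr y :=
  map_add _ x y

theorem disjoint_conic_of_trace_eq_one {a b μ c d ν A B : F h} (hμ : μ ≠ 0) (hμν : μ + ν ≠ 0)
    (hA : (μ + ν) * A = a * ν + c * μ) (hB : (μ + ν) * B = b * ν + d * μ)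
    (hAB : Tr (A * B) = 1) : Disjoint (conic a b μ) (conic c d ν) := by
  refine Set.disjoint_left.2 fun P h₁ h₂ => P.rep_nonzero ?_
  simp only [conic, Set.mem_ofPred_eq] at h₁ h₂
  have hform : A * P.rep 0 ^ 2 + P.rep 0 * P.rep 1 + B * P.rep 1 ^ 2 = 0 := by
    refine (mul_eq_zero_iff_left hμν).1 ?_
    linear_combination ν * h₁ + μ * h₂ + P.rep 0 ^ 2 * hA + P.rep 1 ^ 2 * hB -
      μ * ν * P.rep 2 ^ 2 * CharTwo.two_eq_zero (R := F h)
  obtain ⟨hx, hy⟩ := eq_zero_of_trace_mul_eq_one hAB hform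
  have hz : P.rep 2 = 0 := by
    rw [hx, hy] at h₁
    simpa [hμ] using h₁
  funext i
  fin_cases i <;> assumption

theorem mem_conic_iff_of_mem_conic_add {a₁ b₁ l₁ a₂ b₂ l₂ a b : F h} {P : Pt h}
    (hl₁ : l₁ ≠ 0) (hl₂ : l₂ ≠ 0) (ha : (l₁ + l₂) * a = a₁ * l₁ + a₂ * l₂)
    (hb : (l₁ + l₂) * b = b₁ * l₁ + b₂ * l₂) (hP : P ∈ conic a b (l₁ + l₂)) :
    P ∈ conic a₁ b₁ l₁ ↔ P ∈ conic a₂ b₂ l₂ := by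
  simp only [conic, Set.mem_ofPred_eq] at hP ⊢
  have key : l₁ * (a₁ * P.rep 0 ^ 2 + P.rep 0 * P.rep 1 + b₁ * P.rep 1 ^ 2 + l₁ * P.rep 2 ^ 2) +
      l₂ * (a₂ * P.rep 0 ^ 2 + P.rep 0 * P.rep 1 + b₂ * P.rep 1 ^ 2 + l₂ * P.rep 2 ^ 2) = 0 := by
    linear_combination (-(l₁ + l₂)) * hP - P.rep 0 ^ 2 * ha - P.rep 1 ^ 2 * hb +
      ((l₁ + l₂) * (a * P.rep 0 ^ 2 + P.rep 0 * P.rep 1 + b * P.rep 1 ^ 2) +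
        (l₁ ^ 2 + l₁ * l₂ + l₂ ^ 2) * P.rep 2 ^ 2) * CharTwo.two_eq_zero (R := F h)
  rw [CharTwo.add_eq_zero] at key
  rw [← mul_eq_zero_iff_left hl₁, key, mul_eq_zero_iff_left hl₂]

end Conics

theorem stmt0_general (h : ℕ) (α β α' β' lam lam' : F h)
    (hlam : lam ≠ 0) (hlam' : lam' ≠ 0) (hll : lam ≠ lam')
    (htr1 : Tr (α * β) = 1) (htr2 : Tr (α' * β') = 1)
    (htr3 : Tr (((α * lam + α' * lam') / (lam + lam')) *
                ((β * lam + β' * lam') / (lam + lam'))) = 1) :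
    Disjoint (conic α β lam) (conic α' β' lam') ∧
    Disjoint (conic α β lam)
      (conic ((α * lam + α' * lam') / (lam + lam'))
             ((β * lam + β' * lam') / (lam + lam')) (lam + lam')) ∧
    Disjoint (conic α' β' lam')
      (conic ((α * lam + α' * lam') / (lam + lam'))
             ((β * lam + β' * lam') / (lam + lam')) (lam + lam')) := by
  have hs : lam + lam' ≠ 0 := fun h0 => hll (CharTwo.add_eq_zero.1 h0)
  have h₁₂ : Disjoint (conic α β lam) (conic α' β' lam') :=
    disjoint_conic_of_trace_eq_one hlam hs (mul_div_cancel₀ _ hs) (mul_div_cancel₀ _ hs)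
      (by rw [CharTwo.swapped_weighted_means_mul α β α' β' hs, Tr_add, Tr_add, htr1, htr2, htr3]
          decide)
  have hmem := fun P => mem_conic_iff_of_mem_conic_add (P := P) hlam hlam'
    (mul_div_cancel₀ (α * lam + α' * lam') hs) (mul_div_cancel₀ (β * lam + β' * lam') hs)
  exact ⟨h₁₂, Set.disjoint_right.2 fun P hP h₁ => Set.disjoint_left.1 h₁₂ h₁ ((hmem P hP).1 h₁),
    Set.disjoint_right.2 fun P hP h₂ => Set.disjoint_left.1 h₁₂ ((hmem P hP).2 h₂) h₂⟩

theorem stmt0 (h : ℕ) (hh : h ≠ 0) (α β α' β' lam lam' : F h)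
    (hlam : lam ≠ 0) (hlam' : lam' ≠ 0) (hll : lam ≠ lam')
    (htr1 : Tr (α * β) = 1) (htr2 : Tr (α' * β') = 1)
    (htr3 : Tr (((α * lam + α' * lam') / (lam + lam')) *
                ((β * lam + β' * lam') / (lam + lam'))) = 1) :
    Disjoint (conic α β lam) (conic α' β' lam') ∧
    Disjoint (conic α β lam)
      (conic ((α * lam + α' * lam') / (lam + lam'))
             ((β * lam + β' * lam') / (lam + lam')) (lam + lam')) ∧
    Disjoint (conic α' β' lam')
      (conic ((α * lam + α' * lam') / (lam + lam'))
             ((β * lam + β' * lam') / (lam + lam')) (lam + lam')) :=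
  stmt0_general h α β α' β' lam lam' hlam hlam' hll htr1 htr2 htr3
end
end

section
/- Let C be a closed set of conics in PG(2,q) with |C| = d − 1 (so the union of the conics of C with the point (0,0,1) is a degree-d maximal arc M of Mathon type), and let F_{α0,β0,λ0} with λ0 ∈ F* and Tr(α0β0) = 1 be a conic whose point set is disjoint from the point set of every member of C. Then there is exactly one closed set C' of conics with |C'| = 2d − 1 such that C ∪ {F_{α0,β0,λ0}} ⊆ C'; i.e., there is a unique degree-2d maximal arc of Mathon type with nucleus (0,0,1) containing M and the given conic. -/
open Projectivization

noncomputable section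

/-- Mathon's composition of conics, on the level of parameter triples `(α, β, λ)`. -/
def compose {h : ℕ} (c c' : F h × F h × F h) : F h × F h × F h :=
  ((c.1 * c.2.2 + c'.1 * c'.2.2) / (c.2.2 + c'.2.2),
   (c.2.1 * c.2.2 + c'.2.1 * c'.2.2) / (c.2.2 + c'.2.2),
   c.2.2 + c'.2.2)

/-- A closed set of conics, given by a finite set of parameter triples `(α, β, λ)`. -/
def IsClosedConicSet {h : ℕ} (C : Finset (F h × F h × F h)) : Prop :=
  (∀ c ∈ C, c.2.2 ≠ 0 ∧ Tr (c.1 * c.2.1) = 1) ∧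
  (∀ c ∈ C, ∀ c' ∈ C, c ≠ c' → c.2.2 ≠ c'.2.2) ∧
  (∀ c ∈ C, ∀ c' ∈ C, c ≠ c' → compose c c' ∈ C)

/-!
Put `scale (α, β, λ) = (αλ, βλ, λ)`, with inverse `unscale (a, b, λ) = (a/λ, b/λ, λ)` for `λ ≠ 0`.
Then `compose c c' = unscale (scale c + scale c')`, so in characteristic two a closed set of
conics `C` is the same as the set of nonzero vectors of a finite additive group `W = {0} ∪ scale C ⊆ F³` on which the third coordinate is injective and whose
nonzero vectors satisfy the trace condition. Adjoining `v = scale c₀` gives `W ∪ (W + v)`, of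
order `2|W|`; it is the only candidate, since any closed set containing `C` and `c₀` comes from a
group containing `W` and `v`.

That `W ∪ (W + v)` is admissible comes from geometry. Eliminating `z`, the conics `F_{α,β,λ}`
(`λ ≠ 0`) and `F_{α',β',λ'}` meet as soon as the binary form
`(αλ' + α'λ) x² + (λ + λ') x y + (βλ' + β'λ) y² = A x² + M x y + B y²` has a nontrivial zero,
and by additive Hilbert 90 (`s² + s = t` is solvable iff `Tr t = 0`) it has one unless `M ≠ 0`
and `Tr (AB/M²) = 1`. Since `α''β'' = αβ + α'β' + AB/M²` for the composite conic, disjointness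
forces `λ ≠ λ'` and the trace condition on the composite.
-/

open Finset

namespace Mathon

open scoped Classical

variable {h : ℕ}

lemma Tr_add (x y : F h) : Tr (x + y) = Tr x + Tr y := map_add _ x y

lemma Tr_sq (x : F h) : Tr (x ^ 2) = Tr x := by
  simpa [Tr, ZMod.card] using
    Algebra.trace_eq_of_algEquiv (FiniteField.frobeniusAlgEquivOfAlgebraic (ZMod 2) (F h)) x

lemma Tr_surjective : Function.Surjective (Tr : F h → ZMod 2) := Algebra.trace_surjective _ _

lemma exists_sq_eq (t : F h) : ∃ z, z ^ 2 = t := surjective_frobenius (F h) 2 t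

lemma zmod_two_eq_zero_of_ne_one {u : ZMod 2} (hu : u ≠ 1) : u = 0 := by
  revert u; decide

def artinSchreier (h : ℕ) : F h →+ F h where
  toFun s := s ^ 2 + s
  map_zero' := by simp
  map_add' x y := by rw [CharTwo.add_sq]; abel

lemma card_ker_artinSchreier : Nat.card (artinSchreier h).ker = 2 := by
  rw [Nat.card_eq_two_iff]
  refine ⟨⟨0, by simp [artinSchreier]⟩, ⟨1, by simp [artinSchreier, CharTwo.add_self_eq_zero]⟩,
    by simp [Subtype.ext_iff], ?_⟩
  ext ⟨s, hs⟩
  have : s * (s + 1) = 0 := by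
    change s ^ 2 + s = 0 at hs
    linear_combination hs
  simp only [Set.mem_insert_iff, Set.mem_singleton_iff, Set.mem_univ, iff_true, Subtype.ext_iff]
  rcases mul_eq_zero.mp this with h0 | h1
  · exact .inl h0
  · exact .inr (add_eq_zero_iff_eq_neg.mp h1 |>.trans (CharTwo.neg_eq 1))

lemma exists_sq_add_self_eq (t : F h) (ht : Tr t = 0) : ∃ s, s ^ 2 + s = t := by
  let T : F h →+ ZMod 2 := (Algebra.trace (ZMod 2) (F h)).toAddMonoidHom
  have hle : (artinSchreier h).range ≤ T.ker := by
    rintro _ ⟨s, rfl⟩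
    change Tr (s ^ 2 + s) = 0
    rw [Tr_add, Tr_sq, CharTwo.add_self_eq_zero]
  have hT : Nat.card T.ker * 2 = Nat.card (F h) := by
    rw [← T.ker.card_mul_index, AddSubgroup.index_ker,
      AddMonoidHom.range_eq_top.mpr Tr_surjective, AddSubgroup.card_top, Nat.card_zmod]
  have hA : Nat.card (artinSchreier h).range * 2 = Nat.card (F h) := by
    have := (artinSchreier h).ker.card_mul_index
    rwa [AddSubgroup.index_ker, card_ker_artinSchreier, mul_comm] at this
  have := AddSubgroup.eq_of_le_of_card_ge hle (by omega)
  obtain ⟨s, hs⟩ : t ∈ (artinSchreier h).range := this ▸ ht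
  exact ⟨s, hs⟩

-- For `M = 0` the hypothesis holds trivially (`A * B / 0 = 0`), and so does the conclusion:
-- the form is then the square of a linear form.
lemma exists_binaryForm_eq_zero (A M B : F h) (hT : Tr (A * B / M ^ 2) = 0) :
    ∃ x y : F h, (x ≠ 0 ∨ y ≠ 0) ∧ A * x ^ 2 + M * x * y + B * y ^ 2 = 0 := by
  by_cases hA : A = 0
  · exact ⟨1, 0, .inl one_ne_zero, by simp [hA]⟩
  by_cases hM : M = 0
  · obtain ⟨x, hx⟩ := exists_sq_eq (B / A)
    refine ⟨x, 1, .inr one_ne_zero, ?_⟩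
    rw [hx, hM]
    field_simp
    linear_combination B * CharTwo.two_eq_zero (R := F h)
  · obtain ⟨s, hs⟩ := exists_sq_add_self_eq _ hT
    rw [eq_div_iff (pow_ne_zero 2 hM)] at hs
    refine ⟨M * s / A, 1, .inr one_ne_zero, ?_⟩
    field_simp
    linear_combination hs + A * B * CharTwo.two_eq_zero (R := F h)

lemma mk_mem_conic_iff {α β lam : F h} {v : Fin 3 → F h} (hv : v ≠ 0) :
    mk (F h) v hv ∈ conic α β lam ↔
      α * v 0 ^ 2 + v 0 * v 1 + β * v 1 ^ 2 + lam * v 2 ^ 2 = 0 := by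
  obtain ⟨a, ha⟩ := exists_smul_eq_mk_rep (F h) v hv
  have hQ : α * (a • v) 0 ^ 2 + (a • v) 0 * (a • v) 1 + β * (a • v) 1 ^ 2 + lam * (a • v) 2 ^ 2 =
      (a : F h) ^ 2 * (α * v 0 ^ 2 + v 0 * v 1 + β * v 1 ^ 2 + lam * v 2 ^ 2) := by
    simp only [Pi.smul_apply, Units.smul_def, smul_eq_mul]
    ring
  simp only [conic, Set.mem_ofPred_eq, ← ha, hQ, mul_eq_zero, pow_eq_zero_iff two_ne_zero,
    Units.ne_zero, false_or]

lemma not_disjoint_conic_of_binaryForm_eq_zero {α β lam α' β' lam' x y : F h} (hlam : lam ≠ 0)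
    (hxy : x ≠ 0 ∨ y ≠ 0)
    (hform : (α * lam' + α' * lam) * x ^ 2 + (lam + lam') * x * y
      + (β * lam' + β' * lam) * y ^ 2 = 0) :
    ¬Disjoint (conic α β lam) (conic α' β' lam') := by
  obtain ⟨z, hz⟩ := exists_sq_eq ((α * x ^ 2 + x * y + β * y ^ 2) / lam)
  have hlz : lam * z ^ 2 = α * x ^ 2 + x * y + β * y ^ 2 := by rw [hz]; field_simp
  have hv : ![x, y, z] ≠ 0 := by
    rcases hxy with hx | hy
    · exact fun h0 => hx (congrFun h0 0)
    · exact fun h0 => hy (congrFun h0 1)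
  rw [Set.not_disjoint_iff]
  refine ⟨mk (F h) ![x, y, z] hv, (mk_mem_conic_iff hv).2 ?_, (mk_mem_conic_iff hv).2 ?_⟩
  · simp only [Matrix.cons_val]
    linear_combination hlz + (α * x ^ 2 + x * y + β * y ^ 2) * CharTwo.two_eq_zero (R := F h)
  · simp only [Matrix.cons_val]
    refine (mul_eq_zero.1 ?_).resolve_left hlam
    linear_combination hform + lam' * hlz

lemma compose_fst_mul_snd (α β lam α' β' lam' : F h) (hM : lam + lam' ≠ 0) :
    (compose (α, β, lam) (α', β', lam')).1 * (compose (α, β, lam) (α', β', lam')).2.1 =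
      α * β + α' * β' + (α * lam' + α' * lam) * (β * lam' + β' * lam) / (lam + lam') ^ 2 := by
  simp only [compose]
  field_simp
  linear_combination -(α * β * (lam * lam' + lam' ^ 2) + α' * β' * (lam ^ 2 + lam * lam'))
    * CharTwo.two_eq_zero (R := F h)

theorem ne_and_trace_compose_of_disjoint {c c' : F h × F h × F h} (hlam : c.2.2 ≠ 0)
    (htr : Tr (c.1 * c.2.1) = 1) (htr' : Tr (c'.1 * c'.2.1) = 1)
    (hdis : Disjoint (conic c.1 c.2.1 c.2.2) (conic c'.1 c'.2.1 c'.2.2)) :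
    c.2.2 ≠ c'.2.2 ∧ Tr ((compose c c').1 * (compose c c').2.1) = 1 := by
  obtain ⟨α, β, lam⟩ := c
  obtain ⟨α', β', lam'⟩ := c'
  dsimp only at *
  set A := α * lam' + α' * lam
  set B := β * lam' + β' * lam
  have hT : Tr (A * B / (lam + lam') ^ 2) = 1 := by
    by_contra hne
    obtain ⟨x, y, hxy, hform⟩ := exists_binaryForm_eq_zero _ _ _ (zmod_two_eq_zero_of_ne_one hne)
    exact not_disjoint_conic_of_binaryForm_eq_zero hlam hxy hform hdis
  have hM : lam + lam' ≠ 0 := by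
    rintro hM
    simp [hM, Tr] at hT
  refine ⟨fun heq => hM (by rw [heq, CharTwo.add_self_eq_zero]), ?_⟩
  rw [compose_fst_mul_snd _ _ _ _ _ _ hM, Tr_add, Tr_add, htr, htr', hT]
  decide

section

variable {R : Type*} [Ring R] [DecidableEq R]

def adjoin (W : Finset R) (v : R) : Finset R := W ∪ W.image (· + v)

lemma mem_adjoin [CharP R 2] {W : Finset R} {v x : R} : x ∈ adjoin W v ↔ x ∈ W ∨ x + v ∈ W := by
  simp only [adjoin, mem_union, mem_image, CharTwo.add_eq_iff_eq_add (b := v), exists_eq_right]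

lemma subset_adjoin (W : Finset R) (v : R) : W ⊆ adjoin W v := subset_union_left

lemma add_mem_adjoin [CharP R 2] {W : Finset R} {v x y : R} (hW : ∀ a ∈ W, ∀ b ∈ W, a + b ∈ W)
    (hx : x ∈ adjoin W v) (hy : y ∈ adjoin W v) : x + y ∈ adjoin W v := by
  rw [mem_adjoin] at *
  rcases hx with hx | hx <;> rcases hy with hy | hy
  · exact .inl (hW x hx y hy)
  · exact .inr (by simpa only [add_assoc] using hW x hx _ hy)
  · exact .inr (by simpa only [add_right_comm] using hW _ hx y hy)
  · have := hW _ hx _ hy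
    rw [add_add_add_comm, CharTwo.add_self_eq_zero, add_zero] at this
    exact .inl this

lemma adjoin_subset {W U : Finset R} {v : R} (hWU : W ⊆ U) (hv : v ∈ U)
    (hU : ∀ a ∈ U, ∀ b ∈ U, a + b ∈ U) : adjoin W v ⊆ U :=
  union_subset hWU (image_subset_iff.2 fun w hw => hU w (hWU hw) v hv)

lemma card_adjoin [CharP R 2] {W : Finset R} {v : R} (hW : ∀ a ∈ W, ∀ b ∈ W, a + b ∈ W)
    (hv : v ∉ W) : (adjoin W v).card = 2 * W.card := by
  have hdisj : Disjoint W (W.image (· + v)) := by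
    refine disjoint_right.2 fun x hx hxW => hv ?_
    obtain ⟨w, hw, rfl⟩ := mem_image.1 hx
    simpa only [CharTwo.add_cancel_left] using hW w hw _ hxW
  rw [adjoin, card_union_of_disjoint hdisj, card_image_of_injective _ (add_left_injective v),
    two_mul]

end

def scale (c : F h × F h × F h) : F h × F h × F h := (c.1 * c.2.2, c.2.1 * c.2.2, c.2.2)

def unscale (v : F h × F h × F h) : F h × F h × F h := (v.1 / v.2.2, v.2.1 / v.2.2, v.2.2)

@[simp]
lemma unscale_lam (v : F h × F h × F h) : (unscale v).2.2 = v.2.2 := rfl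

lemma compose_eq_unscale_add (c c' : F h × F h × F h) :
    compose c c' = unscale (scale c + scale c') := rfl

lemma unscale_scale {c : F h × F h × F h} (hc : c.2.2 ≠ 0) : unscale (scale c) = c := by
  simp [unscale, scale, hc]

lemma scale_unscale {v : F h × F h × F h} (hv : v.2.2 ≠ 0) : scale (unscale v) = v := by
  simp [unscale, scale, hv]

lemma scale_compose {c c' : F h × F h × F h} (hcc' : c.2.2 + c'.2.2 ≠ 0) :
    scale (compose c c') = scale c + scale c' := by
  rw [compose_eq_unscale_add]
  exact scale_unscale (by simpa [scale] using hcc')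

structure IsConicGroup (W : Finset (F h × F h × F h)) : Prop where
  zero_mem : 0 ∈ W
  add_mem : ∀ v ∈ W, ∀ w ∈ W, v + w ∈ W
  eq_zero_of_lam_eq_zero : ∀ v ∈ W, v.2.2 = 0 → v = 0
  trace_eq_one : ∀ v ∈ W, v ≠ 0 → Tr ((unscale v).1 * (unscale v).2.1) = 1

def conicsOf (W : Finset (F h × F h × F h)) : Finset (F h × F h × F h) :=
  (W.erase 0).image unscale

def conicGroup (C : Finset (F h × F h × F h)) : Finset (F h × F h × F h) :=
  insert 0 (C.image scale)

namespace IsConicGroup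

variable {W : Finset (F h × F h × F h)} (hW : IsConicGroup W)
include hW

lemma lam_ne_zero {v : F h × F h × F h} (hv : v ∈ W) (hv0 : v ≠ 0) : v.2.2 ≠ 0 :=
  mt (hW.eq_zero_of_lam_eq_zero v hv) hv0

lemma injOn_unscale : Set.InjOn unscale (W.erase 0 : Set (F h × F h × F h)) := by
  intro v hv w hw hvw
  simp only [coe_erase, Set.mem_sdiff, mem_coe, Set.mem_singleton_iff] at hv hw
  rw [← scale_unscale (hW.lam_ne_zero hv.1 hv.2), hvw, scale_unscale (hW.lam_ne_zero hw.1 hw.2)]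

lemma card_conicsOf : (conicsOf W).card + 1 = W.card := by
  rw [conicsOf, card_image_of_injOn hW.injOn_unscale, card_erase_add_one hW.zero_mem]

lemma isClosedConicSet_conicsOf : IsClosedConicSet (conicsOf W) := by
  simp only [IsClosedConicSet, conicsOf, forall_mem_image, mem_erase, unscale_lam]
  refine ⟨fun v ⟨hv0, hv⟩ => ⟨hW.lam_ne_zero hv hv0, hW.trace_eq_one v hv hv0⟩,
    fun v ⟨_, hv⟩ w ⟨_, hw⟩ hvw hlam => hvw ?_, fun v ⟨hv0, hv⟩ w ⟨hw0, hw⟩ hvw => ?_⟩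
  · have := hW.eq_zero_of_lam_eq_zero (v + w) (hW.add_mem v hv w hw)
      (by simpa [unscale, CharTwo.add_eq_zero] using hlam)
    rw [CharTwo.add_eq_zero.1 this]
  · refine mem_image.2 ⟨v + w, mem_erase.2 ⟨fun h0 => hvw ?_, hW.add_mem v hv w hw⟩, ?_⟩
    · rw [CharTwo.add_eq_zero.1 h0]
    · rw [compose_eq_unscale_add, scale_unscale (hW.lam_ne_zero hv hv0),
        scale_unscale (hW.lam_ne_zero hw hw0)]

lemma isConicGroup_adjoin {v : F h × F h × F h} (hlam : ∀ w ∈ W, w.2.2 ≠ v.2.2)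
    (htr : ∀ w ∈ W, Tr ((unscale (w + v)).1 * (unscale (w + v)).2.1) = 1) :
    IsConicGroup (adjoin W v) where
  zero_mem := subset_adjoin W v hW.zero_mem
  add_mem _ hx _ hy := add_mem_adjoin hW.add_mem hx hy
  eq_zero_of_lam_eq_zero x hx hx0 := by
    rcases mem_adjoin.1 hx with hx | hx
    · exact hW.eq_zero_of_lam_eq_zero x hx hx0
    · exact absurd (by simp [hx0]) (hlam _ hx)
  trace_eq_one x hx hx0 := by
    rcases mem_adjoin.1 hx with hx | hx
    · exact hW.trace_eq_one x hx hx0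
    · have := htr _ hx
      rwa [CharTwo.add_cancel_right] at this

lemma card_adjoin {v : F h × F h × F h} (hlam : ∀ w ∈ W, w.2.2 ≠ v.2.2) :
    (adjoin W v).card = 2 * W.card :=
  Mathon.card_adjoin hW.add_mem fun hv => hlam v hv rfl

end IsConicGroup

lemma mem_conicGroup {C : Finset (F h × F h × F h)} {v : F h × F h × F h} :
    v ∈ conicGroup C ↔ v = 0 ∨ ∃ c ∈ C, scale c = v := by
  rw [conicGroup, mem_insert, mem_image]

lemma conicsOf_conicGroup {C : Finset (F h × F h × F h)} (hC : ∀ c ∈ C, c.2.2 ≠ 0) :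
    conicsOf (conicGroup C) = C := by
  have h0 : (0 : F h × F h × F h) ∉ C.image scale := by
    simp only [mem_image, not_exists, not_and]
    exact fun c hc h0 => hC c hc (congrArg (·.2.2) h0)
  rw [conicsOf, conicGroup, erase_insert h0, image_image]
  exact (image_congr fun c hc => unscale_scale (hC c hc)).trans image_id

lemma isConicGroup_conicGroup {C : Finset (F h × F h × F h)} (hC : IsClosedConicSet C) :
    IsConicGroup (conicGroup C) where
  zero_mem := mem_insert_self _ _
  add_mem v hv w hw := by
    rcases mem_conicGroup.1 hv with rfl | ⟨c, hc, rfl⟩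
    · rwa [zero_add]
    rcases mem_conicGroup.1 hw with rfl | ⟨c', hc', rfl⟩
    · rwa [add_zero]
    by_cases hcc' : c = c'
    · rw [hcc', CharTwo.add_self_eq_zero]
      exact mem_insert_self _ _
    · have hlam : c.2.2 + c'.2.2 ≠ 0 := mt CharTwo.add_eq_zero.1 (hC.2.1 c hc c' hc' hcc')
      rw [← scale_compose hlam]
      exact mem_conicGroup.2 (.inr ⟨_, hC.2.2 c hc c' hc' hcc', rfl⟩)
  eq_zero_of_lam_eq_zero v hv hv0 := by
    rcases mem_conicGroup.1 hv with rfl | ⟨c, hc, rfl⟩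
    · rfl
    · exact absurd hv0 (hC.1 c hc).1
  trace_eq_one v hv hv0 := by
    rcases mem_conicGroup.1 hv with rfl | ⟨c, hc, rfl⟩
    · exact absurd rfl hv0
    · rw [unscale_scale (hC.1 c hc).1]
      exact (hC.1 c hc).2

lemma card_conicGroup {C : Finset (F h × F h × F h)} (hC : IsClosedConicSet C) :
    (conicGroup C).card = C.card + 1 := by
  rw [← (isConicGroup_conicGroup hC).card_conicsOf,
    conicsOf_conicGroup fun c hc => (hC.1 c hc).1]

lemma conicsOf_mono {W W' : Finset (F h × F h × F h)} (hWW' : W ⊆ W') :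
    conicsOf W ⊆ conicsOf W' :=
  image_subset_image (erase_subset_erase _ hWW')

lemma unscale_mem_conicsOf_adjoin {W : Finset (F h × F h × F h)} {v : F h × F h × F h}
    (hW : 0 ∈ W) (hv : v ≠ 0) : unscale v ∈ conicsOf (adjoin W v) :=
  mem_image.2 ⟨v, mem_erase.2 ⟨hv, mem_adjoin.2 (.inr (by rwa [CharTwo.add_self_eq_zero]))⟩, rfl⟩

theorem existsUnique_isClosedConicSet_superset {C : Finset (F h × F h × F h)}
    {c0 : F h × F h × F h} (hC : IsClosedConicSet C) (hl0 : c0.2.2 ≠ 0)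
    (hc0 : ∀ c ∈ C, c.2.2 ≠ c0.2.2 ∧ Tr ((compose c c0).1 * (compose c c0).2.1) = 1)
    (htr0 : Tr (c0.1 * c0.2.1) = 1) :
    ∃! C' : Finset (F h × F h × F h),
      IsClosedConicSet C' ∧ C'.card + 1 = 2 * (C.card + 1) ∧ C ⊆ C' ∧ c0 ∈ C' := by
  set W := conicGroup C
  have hW := isConicGroup_conicGroup hC
  have hlam : ∀ w ∈ W, w.2.2 ≠ (scale c0).2.2 := fun w hw => by
    rcases mem_conicGroup.1 hw with rfl | ⟨c, hc, rfl⟩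
    exacts [hl0.symm, (hc0 c hc).1]
  have htr : ∀ w ∈ W, Tr ((unscale (w + scale c0)).1 * (unscale (w + scale c0)).2.1) = 1 :=
    fun w hw => by
      rcases mem_conicGroup.1 hw with rfl | ⟨c, hc, rfl⟩
      exacts [by rwa [zero_add, unscale_scale hl0], (hc0 c hc).2]
  have hW' := hW.isConicGroup_adjoin hlam htr
  have hcard : (adjoin W (scale c0)).card = 2 * (C.card + 1) := by
    rw [hW.card_adjoin hlam, card_conicGroup hC]
  refine ⟨conicsOf (adjoin W (scale c0)), ⟨hW'.isClosedConicSet_conicsOf,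
    hW'.card_conicsOf.trans hcard, ?_, ?_⟩, ?_⟩
  · rw [← conicsOf_conicGroup fun c hc => (hC.1 c hc).1]
    exact conicsOf_mono (subset_adjoin _ _)
  · have := unscale_mem_conicsOf_adjoin (v := scale c0) hW.zero_mem
      fun h0 => hl0 (congrArg (·.2.2) h0)
    rwa [unscale_scale hl0] at this
  · rintro C' ⟨hC', hcard', hCC', hc0C'⟩
    have hsub : adjoin W (scale c0) ⊆ conicGroup C' :=
      adjoin_subset (insert_subset_insert _ (image_subset_image hCC'))
        (mem_conicGroup.2 (.inr ⟨c0, hc0C', rfl⟩)) (isConicGroup_conicGroup hC').add_mem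
    rw [← conicsOf_conicGroup fun c hc => (hC'.1 c hc).1,
      eq_of_subset_of_card_le hsub (by rw [card_conicGroup hC', hcard]; omega)]

end Mathon

open Mathon in
theorem stmt3_general (h : ℕ) (d : ℕ) (C : Finset (F h × F h × F h))
    (hC : IsClosedConicSet C) (hcard : C.card + 1 = d)
    (α0 β0 lam0 : F h) (hl0 : lam0 ≠ 0) (htr0 : Tr (α0 * β0) = 1)
    (hdisj : ∀ c ∈ C, Disjoint (conic c.1 c.2.1 c.2.2) (conic α0 β0 lam0)) :
    ∃! C' : Finset (F h × F h × F h),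
      IsClosedConicSet C' ∧ C'.card + 1 = 2 * d ∧
        C ⊆ C' ∧ (α0, β0, lam0) ∈ C' := by
  subst hcard
  refine existsUnique_isClosedConicSet_superset (c0 := (α0, β0, lam0)) hC hl0 (fun c hc => ?_)
    htr0
  exact ne_and_trace_compose_of_disjoint (hC.1 c hc).1 (hC.1 c hc).2 htr0 (hdisj c hc)

theorem stmt3 (h : ℕ) (hh : h ≠ 0) (d : ℕ) (C : Finset (F h × F h × F h))
    (hC : IsClosedConicSet C) (hcard : C.card + 1 = d)
    (α0 β0 lam0 : F h) (hl0 : lam0 ≠ 0) (htr0 : Tr (α0 * β0) = 1)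
    (hdisj : ∀ c ∈ C, Disjoint (conic c.1 c.2.1 c.2.2) (conic α0 β0 lam0)) :
    ∃! C' : Finset (F h × F h × F h),
      IsClosedConicSet C' ∧ C'.card + 1 = 2 * d ∧
        C ⊆ C' ∧ (α0, β0, lam0) ∈ C' :=
  stmt3_general h d C hC hcard α0 β0 lam0 hl0 htr0 hdisj
end
end

section
/- Let A ⊆ F* be a set such that A ∪ {0} is closed under addition, and let p, r : A → F satisfy Tr(p(λ)r(λ)) = 1 for all λ ∈ A and the closure identities (s·p(s) + t·p(t))/(s + t) = p(s + t) and (s·r(s) + t·r(t))/(s + t) = r(s + t) for all distinct s, t ∈ A. Define B = A ∪ {0}, f(0) = g(0) = 0 and f(t) = t·p(t), g(t) = t·r(t) for t ∈ A. Then f and g are additive on B (f(s+t) = f(s) + f(t) and g(s+t) = g(s) + g(t) for all s, t ∈ B), and Tr[((f(s) + f(t))·(g(s) + g(t)))/(s + t)²] = 1 for all distinct s, t ∈ B; i.e., B, f, g define an additive partial flock of the quadratic cone of size |A| + 1. -/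
/-!
STATEMENT 4: From a closed set of conics to an additive partial flock.  Given
`A ⊆ F*` with `A ∪ {0}` closed under addition and `p, r : A → F` satisfying the
trace condition `Tr(p(λ)r(λ)) = 1` and Mathon's closure identities, the functions
`f(t) = t·p(t)`, `g(t) = t·r(t)` (with `f(0) = g(0) = 0`) are additive on
`B = A ∪ {0}` and satisfy the partial-flock trace condition
`Tr[((f(s)+f(t))(g(s)+g(t)))/(s+t)²] = 1` for distinct `s, t ∈ B`;
moreover `|B| = |A| + 1`.
-/

noncomputable section

theorem stmt4 (h : ℕ) (hh : h ≠ 0) (A : Set (F h)) (hA0 : (0 : F h) ∉ A)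
    (hAadd : ∀ s ∈ A, ∀ t ∈ A, s + t ∈ A ∪ {0})
    (p r : F h → F h)
    (htr : ∀ lam ∈ A, Tr (p lam * r lam) = 1)
    (hp : ∀ s ∈ A, ∀ t ∈ A, s ≠ t → (s * p s + t * p t) / (s + t) = p (s + t))
    (hr : ∀ s ∈ A, ∀ t ∈ A, s ≠ t → (s * r s + t * r t) / (s + t) = r (s + t))
    (f g : F h → F h) (hf0 : f 0 = 0) (hg0 : g 0 = 0)
    (hf : ∀ t ∈ A, f t = t * p t) (hg : ∀ t ∈ A, g t = t * r t) :
    (∀ s ∈ A ∪ {0}, ∀ t ∈ A ∪ {0}, f (s + t) = f s + f t ∧ g (s + t) = g s + g t) ∧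
    (∀ s ∈ A ∪ {0}, ∀ t ∈ A ∪ {0}, s ≠ t →
        Tr ((f s + f t) * (g s + g t) / (s + t) ^ 2) = 1) ∧
    (A ∪ {0} : Set (F h)).ncard = A.ncard + 1 := by
  have char2 : CharP (F h) 2 := inferInstance
  have hne : ∀ s ∈ A, ∀ t ∈ A, s ≠ t → s + t ∈ A ∧ s + t ≠ 0 := by
    intro s hs t ht hst
    have h0 : s + t ≠ 0 := by
      intro h0
      exact hst (by rwa [CharTwo.add_eq_iff_eq_add, zero_add] at h0)
    rcases hAadd s hs t ht with h1 | h1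
    · exact ⟨h1, h0⟩
    · exact absurd h1 h0
  -- additivity for both f and g
  have key : ∀ (p' f' : F h → F h), f' 0 = 0 → (∀ t ∈ A, f' t = t * p' t) →
      (∀ s ∈ A, ∀ t ∈ A, s ≠ t → (s * p' s + t * p' t) / (s + t) = p' (s + t)) →
      ∀ s ∈ A ∪ {0}, ∀ t ∈ A ∪ {0}, f' (s + t) = f' s + f' t := by
    intro p' f' hf0' hf' hp' s hs t ht
    rcases hs with hs | hs
    · rcases ht with ht | ht
      · by_cases hst : s = t
        · subst hst
          rw [CharTwo.add_self_eq_zero, hf0', CharTwo.add_self_eq_zero]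
        · obtain ⟨hmem, h0⟩ := hne s hs t ht hst
          rw [hf' _ hmem, ← hp' s hs t ht hst, mul_div_cancel₀ _ h0,
            hf' s hs, hf' t ht]
      · simp only [Set.mem_singleton_iff] at ht
        subst ht; simp [hf0']
    · simp only [Set.mem_singleton_iff] at hs
      subst hs; simp [hf0']
  refine ⟨fun s hs t ht => ⟨key p f hf0 hf hp s hs t ht, key r g hg0 hg hr s hs t ht⟩,
    ?_, ?_⟩
  · intro s hs t ht hst
    have main : ∀ u ∈ A, Tr ((u * p u) * (u * r u) / u ^ 2) = 1 := by
      intro u hu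
      have hu0 : u ≠ 0 := fun h0 => hA0 (h0 ▸ hu)
      have : (u * p u) * (u * r u) / u ^ 2 = p u * r u := by
        field_simp
      rw [this]; exact htr u hu
    rcases hs with hs | hs
    · rcases ht with ht | ht
      · obtain ⟨hmem, h0⟩ := hne s hs t ht hst
        have h1 : f s + f t = (s + t) * p (s + t) := by
          rw [hf s hs, hf t ht, ← hp s hs t ht hst, mul_div_cancel₀ _ h0]
        have h2 : g s + g t = (s + t) * r (s + t) := by
          rw [hg s hs, hg t ht, ← hr s hs t ht hst, mul_div_cancel₀ _ h0]
        rw [h1, h2]; exact main _ hmem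
      · simp only [Set.mem_singleton_iff] at ht
        subst ht
        simpa [hf0, hg0, hf s hs, hg s hs] using main s hs
    · simp only [Set.mem_singleton_iff] at hs
      subst hs
      rcases ht with ht | ht
      · have := main t ht
        simpa [hf0, hg0, hf t ht, hg t ht] using this
      · simp only [Set.mem_singleton_iff] at ht
        exact absurd ht.symm hst
  · have hAfin : A.Finite := Set.toFinite A
    rw [Set.union_singleton, Set.ncard_insert_of_notMem hA0 hAfin]
end
end

section
/- Let B ⊆ F be a finite additive subgroup and let f, g : B → F be additive maps (so f(0) = g(0) = 0) satisfying Tr[((f(s) + f(t))·(g(s) + g(t)))/(s + t)²] = 1 for all distinct s, t ∈ B (an additive partial flock of size |B|). Set A = B \ {0} and define p(t) = f(t)/t and r(t) = g(t)/t for t ∈ A. Then Tr(p(t)r(t)) = 1 for all t ∈ A, the closure identities (s·p(s) + t·p(t))/(s + t) = p(s + t) and (s·r(s) + t·r(t))/(s + t) = r(s + t) hold for distinct s, t ∈ A, and the set {F_{p(λ),r(λ),λ} : λ ∈ A} is a closed set of conics; consequently the union of these conics with the point (0,0,1) is a maximal arc of degree |B| in PG(2,q). -/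
/-!
Write `p = f(t)/t`, `r = g(t)/t`. Taking `s = 0` in the flock condition gives `Tr(p r) = 1`, and
additivity of `f, g` is exactly Mathon's closure. In characteristic 2 the form
`A x² + x y + B y²` is anisotropic when `Tr(A B) = 1` (a zero would give a root of `X² + X = A B`)
and splits into two independent linear factors when `Tr(A B) = 0`.

Two conics `c ≠ c'` of a closed set are disjoint: a common point is a zero of such a form whose
invariant has trace `Tr(αβ) + Tr(α'β') + Tr(α''β'') = 1`, where `c'' = c ⊕ c'`. A line through
the nucleus meets every conic exactly once (square roots are unique), giving `|A| + 1 = |B|`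
points. A line `z = a x + b y` meets `F_{p(t), r(t), t}` in the zeros of a binary form with
invariant of trace `1 + φ(t)`, where `φ : B → GF(2)` is additive; hence either no conic meets
the line or exactly half of the `t ∈ B` give two points each.
-/

open Projectivization

noncomputable section

instance {h : ℕ} : DecidableEq (F h) := Classical.decEq _

/-- The point set of the line `[u,v,w]`. -/
def lineSet {h : ℕ} (u v w : F h) : Set (Pt h) :=
  {P | P.rep 0 * u + P.rep 1 * v + P.rep 2 * w = 0}

/-- The common nucleus `(0,0,1)` of the conics `F_{α,β,λ}`. -/
def nucleus {h : ℕ} : Pt h :=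
  Projectivization.mk (F h) ![0, 0, 1] (by
    intro hcon
    simpa using congrFun hcon 2)

/-- The union of the points of the conics of `C` together with the nucleus. -/
def mathonArc {h : ℕ} (C : Finset (F h × F h × F h)) : Set (Pt h) :=
  {nucleus} ∪ ⋃ c ∈ C, conic c.1 c.2.1 c.2.2


section Trace

variable {h : ℕ}

lemma Tr_zero : Tr (0 : F h) = 0 := map_zero _

lemma Tr_sq (x : F h) : Tr (x ^ 2) = Tr x := by
  simpa [Tr, FiniteField.coe_frobeniusAlgEquivOfAlgebraic] using
    Algebra.trace_eq_of_algEquiv (FiniteField.frobeniusAlgEquivOfAlgebraic (ZMod 2) (F h)) x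

lemma Tr_sq_add_self (x : F h) : Tr (x ^ 2 + x) = 0 := by
  rw [Tr_add, Tr_sq, CharTwo.add_self_eq_zero]

variable (h) in
def artinSchreier : F h →ₗ[ZMod 2] F h :=
  (FiniteField.frobeniusAlgHom (ZMod 2) (F h)).toLinearMap + LinearMap.id

lemma artinSchreier_apply (x : F h) : artinSchreier h x = x ^ 2 + x := by
  simp [artinSchreier]

lemma ker_artinSchreier : LinearMap.ker (artinSchreier h) = Submodule.span (ZMod 2) {1} := by
  ext x
  rw [LinearMap.mem_ker, artinSchreier_apply, Submodule.mem_span_singleton]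
  constructor
  · intro hx
    have : x * (x + 1) = 0 := by grind
    rcases mul_eq_zero.1 this with rfl | hx1
    · exact ⟨0, zero_smul _ _⟩
    · exact ⟨1, by rw [one_smul]; grind⟩
  · rintro ⟨a, rfl⟩
    have ha : a ^ 2 + a = 0 := by revert a; decide
    rw [Algebra.smul_def, mul_one, ← map_pow, ← map_add, ha, map_zero]

lemma range_artinSchreier :
    LinearMap.range (artinSchreier h) = LinearMap.ker (Algebra.trace (ZMod 2) (F h)) := by
  refine Submodule.eq_of_le_of_finrank_eq ?_ ?_
  · rintro _ ⟨x, rfl⟩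
    rw [LinearMap.mem_ker, artinSchreier_apply]
    exact Tr_sq_add_self x
  · have hAS := LinearMap.finrank_range_add_finrank_ker (artinSchreier h)
    have hTr := LinearMap.finrank_range_add_finrank_ker (Algebra.trace (ZMod 2) (F h))
    rw [ker_artinSchreier, finrank_span_singleton one_ne_zero] at hAS
    rw [LinearMap.range_eq_top.2 (Algebra.trace_surjective _ _), finrank_top,
      Module.finrank_self] at hTr
    omega

lemma exists_sq_add_self_eq {c : F h} (hc : Tr c = 0) : ∃ x, x ^ 2 + x = c := by
  obtain ⟨x, hx⟩ : c ∈ LinearMap.range (artinSchreier h) := by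
    rw [range_artinSchreier]; exact hc
  exact ⟨x, by rwa [artinSchreier_apply] at hx⟩

end Trace

section BinaryForm

variable {h : ℕ}

lemma eq_zero_of_Tr_mul_eq_one {A B x y : F h} (hT : Tr (A * B) = 1)
    (hQ : A * x ^ 2 + x * y + B * y ^ 2 = 0) : x = 0 ∧ y = 0 := by
  have hA : A ≠ 0 := by rintro rfl; simp [Tr_zero] at hT
  by_cases hy : y = 0
  · subst hy
    simpa [hA] using hQ
  · -- otherwise `A x / y` solves `X² + X = A B`, forcing `Tr (A B) = 0`
    have hroot : (A * x / y) ^ 2 + A * x / y = A * B := by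
      field_simp
      grind
    have := Tr_sq_add_self (A * x / y)
    rw [hroot, hT] at this
    exact absurd this one_ne_zero

lemma exists_factorization_of_Tr_mul_eq_zero {A B : F h} (hT : Tr (A * B) = 0) :
    ∃ a b c d : F h, a * d + b * c = 1 ∧
      ∀ x y, A * x ^ 2 + x * y + B * y ^ 2 = (a * x + b * y) * (c * x + d * y) := by
  by_cases hA : A = 0
  · exact ⟨0, 1, 1, B, by ring, fun x y => by rw [hA]; ring⟩
  · obtain ⟨s, hs⟩ := exists_sq_add_self_eq hT
    refine ⟨A, s, 1, (s + 1) / A, ?_, fun x y => ?_⟩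
    · field_simp
      grind
    · field_simp
      grind

end BinaryForm

open Matrix
open scoped LinearAlgebra.Projectivization

namespace Projectivization

variable {K : Type*} [Field K]

lemma mk_rep_dotProduct_eq_zero_iff {m : Type*} [Fintype m] {v : m → K} (hv : v ≠ 0)
    (ℓ : m → K) : (mk K v hv).rep ⬝ᵥ ℓ = 0 ↔ v ⬝ᵥ ℓ = 0 := by
  obtain ⟨a, ha⟩ := exists_smul_eq_mk_rep K v hv
  rw [← ha, Units.smul_def, smul_dotProduct, smul_eq_zero, or_iff_right a.ne_zero]

lemma eq_mk_crossProduct_iff {ℓ ℓ' : Fin 3 → K} (h : ℓ ⨯₃ ℓ' ≠ 0) (P : ℙ K (Fin 3 → K)) :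
    P = mk K (ℓ ⨯₃ ℓ') h ↔ P.rep ⬝ᵥ ℓ = 0 ∧ P.rep ⬝ᵥ ℓ' = 0 := by
  constructor
  · rintro rfl
    rw [mk_rep_dotProduct_eq_zero_iff, mk_rep_dotProduct_eq_zero_iff, dotProduct_comm,
      dot_self_cross, dotProduct_comm, dot_cross_self]
    exact ⟨rfl, rfl⟩
  · rintro ⟨hℓ, hℓ'⟩
    rw [← P.mk_rep, mk_eq_mk_iff_crossProduct_eq_zero, cross_cross_eq_smul_sub_smul', hℓ',
      dotProduct_comm, hℓ, zero_smul, zero_smul, sub_zero]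

end Projectivization

section Plane

variable {h : ℕ}

lemma rep_two_ne_zero {P : Pt h} (h0 : P.rep 0 = 0) (h1 : P.rep 1 = 0) : P.rep 2 ≠ 0 :=
  fun h2 => P.rep_nonzero (funext fun i => by fin_cases i <;> assumption)

lemma mem_lineSet_iff {u v w : F h} {P : Pt h} :
    P ∈ lineSet u v w ↔ P.rep ⬝ᵥ ![u, v, w] = 0 := by
  rw [vec3_dotProduct]
  simp only [cons_val]
  rfl

lemma mk_mem_conic_iff {α β l : F h} {v : Fin 3 → F h} (hv : v ≠ 0) :
    mk (F h) v hv ∈ conic α β l ↔ α * v 0 ^ 2 + v 0 * v 1 + β * v 1 ^ 2 + l * v 2 ^ 2 = 0 := by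
  obtain ⟨a, ha⟩ := exists_smul_eq_mk_rep (F h) v hv
  change _ = 0 ↔ _
  rw [← ha]
  simp only [Pi.smul_apply, Units.smul_def, smul_eq_mul]
  rw [show α * (a * v 0) ^ 2 + a * v 0 * (a * v 1) + β * (a * v 1) ^ 2 + l * (a * v 2) ^ 2
      = (a : F h) ^ 2 * (α * v 0 ^ 2 + v 0 * v 1 + β * v 1 ^ 2 + l * v 2 ^ 2) by ring,
    mul_eq_zero, or_iff_right (pow_ne_zero _ a.ne_zero)]

lemma lineSet_inter_lineSet {u v w u' v' w' : F h} (hc : ![u, v, w] ⨯₃ ![u', v', w'] ≠ 0) :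
    lineSet u v w ∩ lineSet u' v' w' = {mk (F h) _ hc} := by
  ext P
  rw [Set.mem_inter_iff, mem_lineSet_iff, mem_lineSet_iff, Set.mem_singleton_iff,
    eq_mk_crossProduct_iff]

lemma nucleus_mem_lineSet_iff {u v w : F h} : nucleus ∈ lineSet u v w ↔ w = 0 := by
  rw [nucleus, mem_lineSet_iff, mk_rep_dotProduct_eq_zero_iff]
  simp

lemma nucleus_notMem_conic {α β l : F h} (hl : l ≠ 0) : nucleus ∉ conic α β l := by
  rw [nucleus, mk_mem_conic_iff]
  simpa using hl

lemma conic_equation_of_mem_lineSet {α β l u v w : F h} (hw : w ≠ 0) {P : Pt h}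
    (hP : P ∈ lineSet u v w) :
    α * P.rep 0 ^ 2 + P.rep 0 * P.rep 1 + β * P.rep 1 ^ 2 + l * P.rep 2 ^ 2 =
      (α + l * (u / w) ^ 2) * P.rep 0 ^ 2 + P.rep 0 * P.rep 1 +
        (β + l * (v / w) ^ 2) * P.rep 1 ^ 2 := by
  have hz : P.rep 2 = u / w * P.rep 0 + v / w * P.rep 1 := by
    have : P.rep 0 * u + P.rep 1 * v + P.rep 2 * w = 0 := hP
    field_simp
    grind
  rw [hz]
  grind

lemma conic_inter_lineSet_eq_empty {α β l u v w : F h} (hw : w ≠ 0)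
    (hT : Tr ((α + l * (u / w) ^ 2) * (β + l * (v / w) ^ 2)) = 1) :
    conic α β l ∩ lineSet u v w = ∅ := by
  refine Set.eq_empty_of_forall_notMem fun P ⟨hC, hL⟩ => ?_
  obtain ⟨h0, h1⟩ :=
    eq_zero_of_Tr_mul_eq_one hT ((conic_equation_of_mem_lineSet hw hL).symm.trans hC)
  have h2 : P.rep 0 * u + P.rep 1 * v + P.rep 2 * w = 0 := hL
  rw [h0, h1] at h2
  exact rep_two_ne_zero h0 h1 (by simpa [hw] using h2)

lemma ncard_conic_inter_lineSet_of_Tr_eq_zero {α β l u v w : F h} (hw : w ≠ 0)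
    (hT : Tr ((α + l * (u / w) ^ 2) * (β + l * (v / w) ^ 2)) = 0) :
    (conic α β l ∩ lineSet u v w).ncard = 2 := by
  obtain ⟨a, b, c, d, hdet, hfac⟩ := exists_factorization_of_Tr_mul_eq_zero hT
  have hcross : ∀ {a b : F h}, (a ≠ 0 ∨ b ≠ 0) → ![u, v, w] ⨯₃ ![a, b, 0] ≠ 0 := by
    intro a b hab hc
    have h0 := congrFun hc 0
    have h1 := congrFun hc 1
    simp [cross_apply, hw] at h0 h1
    tauto
  have hab : a ≠ 0 ∨ b ≠ 0 := by by_contra! hab; simp [hab.1, hab.2] at hdet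
  have hcd : c ≠ 0 ∨ d ≠ 0 := by by_contra! hcd; simp [hcd.1, hcd.2] at hdet
  have hsplit : conic α β l ∩ lineSet u v w =
      lineSet u v w ∩ lineSet a b 0 ∪ lineSet u v w ∩ lineSet c d 0 := by
    ext P
    simp only [Set.mem_union, Set.mem_inter_iff, ← and_or_left, and_comm (a := P ∈ conic α β l)]
    refine and_congr_right fun hL => ?_
    change _ = 0 ↔ P.rep 0 * a + P.rep 1 * b + P.rep 2 * 0 = 0 ∨
      P.rep 0 * c + P.rep 1 * d + P.rep 2 * 0 = 0
    rw [conic_equation_of_mem_lineSet hw hL, hfac, mul_eq_zero]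
    ring_nf
  -- the two lines `[a,b,0]` and `[c,d,0]` meet only in the nucleus, which is off `[u,v,w]`
  have hdisj : Disjoint (lineSet u v w ∩ lineSet a b 0) (lineSet u v w ∩ lineSet c d 0) := by
    refine Set.disjoint_left.2 fun P ⟨hL, h1⟩ ⟨_, h2⟩ => ?_
    have e1 : P.rep 0 * a + P.rep 1 * b + P.rep 2 * 0 = 0 := h1
    have e2 : P.rep 0 * c + P.rep 1 * d + P.rep 2 * 0 = 0 := h2
    have hx : P.rep 0 = 0 := by grind
    have hy : P.rep 1 = 0 := by grind
    have hL' : P.rep 0 * u + P.rep 1 * v + P.rep 2 * w = 0 := hL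
    rw [hx, hy] at hL'
    exact rep_two_ne_zero hx hy (by simpa [hw] using hL')
  rw [hsplit, Set.ncard_union_eq hdisj, lineSet_inter_lineSet (hcross hab),
    lineSet_inter_lineSet (hcross hcd), Set.ncard_singleton, Set.ncard_singleton]

lemma ncard_conic_inter_lineSet_of_ne_zero {α β l u v w : F h} (hw : w ≠ 0) :
    (conic α β l ∩ lineSet u v w).ncard =
      if Tr ((α + l * (u / w) ^ 2) * (β + l * (v / w) ^ 2)) = 0 then 2 else 0 := by
  split_ifs with hT
  · exact ncard_conic_inter_lineSet_of_Tr_eq_zero hw hT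
  · rw [conic_inter_lineSet_eq_empty hw (Fin.eq_one_of_ne_zero _ hT), Set.ncard_empty]

lemma exists_conic_inter_lineSet_zero_eq_singleton {α β l u v : F h} (hl : l ≠ 0)
    (huv : u ≠ 0 ∨ v ≠ 0) : ∃ P, conic α β l ∩ lineSet u v 0 = {P} := by
  obtain ⟨r, hr⟩ := surjective_frobenius (F h) 2 ((α * v ^ 2 + v * u + β * u ^ 2) / l)
  rw [frobenius_def, eq_div_iff hl] at hr
  have hne : ![v, u, r] ≠ 0 := fun h0 => by
    have := congrFun h0 0; have := congrFun h0 1; simp_all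
  refine ⟨mk (F h) _ hne, Set.eq_singleton_iff_unique_mem.2 ⟨⟨?_, ?_⟩, ?_⟩⟩
  · rw [mk_mem_conic_iff]
    simp only [cons_val]
    grind
  · rw [mem_lineSet_iff, mk_rep_dotProduct_eq_zero_iff, vec3_dotProduct]
    simp only [cons_val]
    grind
  · rintro P ⟨hC, hL⟩
    have hC' : α * P.rep 0 ^ 2 + P.rep 0 * P.rep 1 + β * P.rep 1 ^ 2 + l * P.rep 2 ^ 2 = 0 := hC
    have hL' : P.rep 0 * u + P.rep 1 * v + P.rep 2 * 0 = 0 := hL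
    -- multiplied by `l`, both squares below are multiples of `u x + v y`
    have e1 : (P.rep 1 * r + P.rep 2 * u) ^ 2 = 0 := by
      refine (mul_right_inj' hl).1 ?_
      grind
    have e2 : (P.rep 2 * v + P.rep 0 * r) ^ 2 = 0 := by
      refine (mul_right_inj' hl).1 ?_
      grind
    rw [← P.mk_rep, mk_eq_mk_iff_crossProduct_eq_zero]
    rw [sq_eq_zero_iff] at e1 e2
    funext i
    fin_cases i <;> simp [cross_apply] <;> grind

end Plane

section ClosedConicSet

variable {h : ℕ}

lemma mul_add_compose_mul {α β l α' β' l' : F h} (hl : l + l' ≠ 0) :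
    (α * l' + α' * l) / (l + l') * ((β * l' + β' * l) / (l + l')) +
        (compose (α, β, l) (α', β', l')).1 * (compose (α, β, l) (α', β', l')).2.1 =
      α * β + α' * β' := by
  simp only [compose]
  field_simp
  grind

lemma disjoint_conic_of_Tr_eq_one {α β l α' β' l' : F h} (hl : l + l' ≠ 0)
    (hT : Tr ((α * l' + α' * l) / (l + l') * ((β * l' + β' * l) / (l + l'))) = 1) :
    Disjoint (conic α β l) (conic α' β' l') := by
  refine Set.disjoint_left.2 fun P hP hP' => ?_
  have e : α * P.rep 0 ^ 2 + P.rep 0 * P.rep 1 + β * P.rep 1 ^ 2 + l * P.rep 2 ^ 2 = 0 := hP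
  have e' : α' * P.rep 0 ^ 2 + P.rep 0 * P.rep 1 + β' * P.rep 1 ^ 2 + l' * P.rep 2 ^ 2 = 0 := hP'
  -- `λ' e + λ e'` eliminates `z`
  obtain ⟨h0, h1⟩ := eq_zero_of_Tr_mul_eq_one hT (x := P.rep 0) (y := P.rep 1) (by
    field_simp
    grind)
  refine rep_two_ne_zero h0 h1 (pow_eq_zero_iff two_ne_zero |>.1 ((mul_right_inj' hl).1 ?_))
  rw [h0, h1] at e e'
  grind

lemma disjoint_conic_of_compose {c c' : F h × F h × F h} (hl : c.2.2 ≠ c'.2.2)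
    (hc : Tr (c.1 * c.2.1) = 1) (hc' : Tr (c'.1 * c'.2.1) = 1)
    (hcc' : Tr ((compose c c').1 * (compose c c').2.1) = 1) :
    Disjoint (conic c.1 c.2.1 c.2.2) (conic c'.1 c'.2.1 c'.2.2) := by
  obtain ⟨α, β, l⟩ := c
  obtain ⟨α', β', l'⟩ := c'
  have hsum : l + l' ≠ 0 := fun h0 => hl (CharTwo.add_eq_zero.1 h0)
  refine disjoint_conic_of_Tr_eq_one hsum ?_
  have := congrArg Tr (mul_add_compose_mul (α := α) (β := β) (α' := α') (β' := β') hsum)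
  rw [Tr_add, Tr_add, hcc'] at this
  simp only at hc hc'
  rw [hc, hc'] at this
  grind

namespace IsClosedConicSet

variable {C : Finset (F h × F h × F h)}

lemma pairwiseDisjoint (hC : IsClosedConicSet C) :
    (C : Set (F h × F h × F h)).PairwiseDisjoint fun c => conic c.1 c.2.1 c.2.2 :=
  fun c hc c' hc' hne => disjoint_conic_of_compose (hC.2.1 c hc c' hc' hne) (hC.1 c hc).2
    (hC.1 c' hc').2 (hC.1 _ (hC.2.2 c hc c' hc' hne)).2

lemma ncard_mathonArc_inter (hC : IsClosedConicSet C) (L : Set (Pt h)) :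
    (mathonArc C ∩ L).ncard =
      ({nucleus} ∩ L).ncard + ∑ c ∈ C, (conic c.1 c.2.1 c.2.2 ∩ L).ncard := by
  have hdisj : Disjoint ({nucleus} ∩ L) (⋃ c ∈ C, conic c.1 c.2.1 c.2.2 ∩ L) := by
    simp only [Set.disjoint_iUnion_right]
    exact fun c hc => (Set.disjoint_singleton_left.2 (nucleus_notMem_conic (hC.1 c hc).1)).mono
      Set.inter_subset_left Set.inter_subset_left
  rw [mathonArc, Set.union_inter_distrib_right, Set.iUnion₂_inter, Set.ncard_union_eq hdisj,
    ← Finset.set_biUnion_coe, Set.Finite.ncard_biUnion C.finite_toSet (fun _ _ => Set.toFinite _)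
      (hC.pairwiseDisjoint.mono fun _ => Set.inter_subset_left), finsum_mem_coe_finset]

lemma ncard_mathonArc_inter_lineSet_zero (hC : IsClosedConicSet C) {u v : F h}
    (huv : u ≠ 0 ∨ v ≠ 0) : (mathonArc C ∩ lineSet u v 0).ncard = C.card + 1 := by
  rw [hC.ncard_mathonArc_inter, Set.inter_eq_left.2
      (Set.singleton_subset_iff.2 (nucleus_mem_lineSet_iff.2 rfl)), Set.ncard_singleton,
    Finset.card_eq_sum_ones, add_comm]
  congr 1
  refine Finset.sum_congr rfl fun c hc => ?_
  obtain ⟨P, hP⟩ := exists_conic_inter_lineSet_zero_eq_singleton (α := c.1) (β := c.2.1)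
    (hC.1 c hc).1 huv
  rw [hP, Set.ncard_singleton]

end IsClosedConicSet

end ClosedConicSet

open Finset in
lemma two_mul_card_filter_eq_one {G : Type*} [Add G] [IsRightCancelAdd G] {B : Finset G}
    (hB : ∀ s ∈ B, ∀ t ∈ B, s + t ∈ B) {φ : G → ZMod 2}
    (hφ : ∀ s ∈ B, ∀ t ∈ B, φ (s + t) = φ s + φ t) :
    2 * #{t ∈ B | φ t = 1} = 0 ∨ 2 * #{t ∈ B | φ t = 1} = #B := by
  by_cases hex : ∃ t₀ ∈ B, φ t₀ = 1
  · right
    obtain ⟨t₀, ht₀, hφt₀⟩ := hex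
    -- translation by `t₀` swaps the two fibres of `φ`
    have hshift : ∀ a ∈ B, (φ (a + t₀) = 1 ↔ φ a ≠ 1) := fun a ha => by
      rw [hφ a ha t₀ ht₀, hφt₀]
      generalize φ a = x
      revert x; decide
    have hinj : Set.InjOn (· + t₀) (B : Set G) := fun a _ b _ hab => add_right_cancel hab
    have h1 : #{t ∈ B | φ t = 1} ≤ #{t ∈ B | ¬φ t = 1} :=
      card_le_card_of_injOn (· + t₀) (fun a ha => by
        simp only [coe_filter, Set.mem_ofPred_eq] at ha ⊢
        exact ⟨hB a ha.1 t₀ ht₀, fun h' => (hshift a ha.1).1 h' ha.2⟩)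
        (hinj.mono (coe_subset.2 (filter_subset _ _)))
    have h2 : #{t ∈ B | ¬φ t = 1} ≤ #{t ∈ B | φ t = 1} :=
      card_le_card_of_injOn (· + t₀) (fun a ha => by
        simp only [coe_filter, Set.mem_ofPred_eq] at ha ⊢
        exact ⟨hB a ha.1 t₀ ht₀, (hshift a ha.1).2 ha.2⟩)
        (hinj.mono (coe_subset.2 (filter_subset _ _)))
    have := card_filter_add_card_filter_not (s := B) (fun t => φ t = 1)
    omega
  · left
    simp only [not_exists, not_and] at hex
    rw [filter_false_of_mem hex, card_empty, mul_zero]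

lemma mul_div_add_mul_div_of_map_add {h : ℕ} {B : Finset (F h)} {f : F h → F h}
    (hf : ∀ s ∈ B, ∀ t ∈ B, f (s + t) = f s + f t) {s t : F h} (hs : s ∈ B) (ht : t ∈ B)
    (hs0 : s ≠ 0) (ht0 : t ≠ 0) :
    (s * (f s / s) + t * (f t / t)) / (s + t) = f (s + t) / (s + t) := by
  rw [mul_div_cancel₀ _ hs0, mul_div_cancel₀ _ ht0, hf s hs t ht]

structure IsAdditivePartialFlock {h : ℕ} (B : Finset (F h)) (f g : F h → F h) : Prop where
  zero_mem : (0 : F h) ∈ B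
  add_mem : ∀ s ∈ B, ∀ t ∈ B, s + t ∈ B
  map_add_left : ∀ s ∈ B, ∀ t ∈ B, f (s + t) = f s + f t
  map_add_right : ∀ s ∈ B, ∀ t ∈ B, g (s + t) = g s + g t
  trace_eq_one : ∀ s ∈ B, ∀ t ∈ B, s ≠ t → Tr ((f s + f t) * (g s + g t) / (s + t) ^ 2) = 1

def flockConics {h : ℕ} (B : Finset (F h)) (f g : F h → F h) : Finset (F h × F h × F h) :=
  (B.erase 0).image fun t => (f t / t, g t / t, t)

namespace IsAdditivePartialFlock

variable {h : ℕ} {B : Finset (F h)} {f g : F h → F h}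

lemma map_zero_left (hF : IsAdditivePartialFlock B f g) : f 0 = 0 := by
  simpa using hF.map_add_left 0 hF.zero_mem 0 hF.zero_mem

lemma map_zero_right (hF : IsAdditivePartialFlock B f g) : g 0 = 0 := by
  simpa using hF.map_add_right 0 hF.zero_mem 0 hF.zero_mem

lemma Tr_div_mul_div (hF : IsAdditivePartialFlock B f g) {t : F h} (ht : t ∈ B) (ht0 : t ≠ 0) :
    Tr (f t / t * (g t / t)) = 1 := by
  have := hF.trace_eq_one 0 hF.zero_mem t ht (Ne.symm ht0)
  rw [div_mul_div_comm, ← sq]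
  rwa [hF.map_zero_left, hF.map_zero_right, zero_add, zero_add, zero_add] at this

lemma isClosedConicSet (hF : IsAdditivePartialFlock B f g) :
    IsClosedConicSet (flockConics B f g) := by
  refine ⟨?_, ?_, ?_⟩
  · simp only [flockConics, Finset.mem_image, Finset.mem_erase]
    rintro _ ⟨t, ⟨ht0, ht⟩, rfl⟩
    exact ⟨ht0, hF.Tr_div_mul_div ht ht0⟩
  · simp only [flockConics, Finset.mem_image]
    rintro _ ⟨t, -, rfl⟩ _ ⟨t', -, rfl⟩ hne rfl
    exact hne rfl
  · simp only [flockConics, Finset.mem_image, Finset.mem_erase]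
    rintro _ ⟨t, ⟨ht0, ht⟩, rfl⟩ _ ⟨t', ⟨ht0', ht'⟩, rfl⟩ hne
    have htt' : t ≠ t' := by rintro rfl; exact hne rfl
    refine ⟨t + t', ⟨fun h0 => htt' (CharTwo.add_eq_zero.1 h0), hF.add_mem t ht t' ht'⟩, ?_⟩
    simp only [compose, div_mul_cancel₀ _ ht0, div_mul_cancel₀ _ ht0', hF.map_add_left t ht t' ht',
      hF.map_add_right t ht t' ht']

lemma card_flockConics (hF : IsAdditivePartialFlock B f g) :
    (flockConics B f g).card + 1 = B.card := by
  rw [flockConics, Finset.card_image_of_injective _ fun t t' htt' => congrArg (·.2.2) htt',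
    Finset.card_erase_add_one hF.zero_mem]

end IsAdditivePartialFlock

/-- The line `z = a x + b y` meets `F_{f(t)/t, g(t)/t, t}` (in two points) iff this is `1`, by
`IsAdditivePartialFlock.Tr_add_sq_mul_add_sq` and `ncard_conic_inter_lineSet_of_ne_zero`. -/
def lineCharacter {h : ℕ} (f g : F h → F h) (a b t : F h) : ZMod 2 :=
  Tr (a ^ 2 * g t + b ^ 2 * f t + (a * b) ^ 2 * t ^ 2)

namespace IsAdditivePartialFlock

open Finset

variable {h : ℕ} {B : Finset (F h)} {f g : F h → F h}

lemma Tr_add_sq_mul_add_sq (hF : IsAdditivePartialFlock B f g) {t : F h} (ht : t ∈ B)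
    (ht0 : t ≠ 0) (a b : F h) :
    Tr ((f t / t + t * a ^ 2) * (g t / t + t * b ^ 2)) = 1 + lineCharacter f g a b t := by
  rw [lineCharacter, ← hF.Tr_div_mul_div ht ht0, ← Tr_add]
  congr 1
  field_simp
  ring

lemma lineCharacter_zero (hF : IsAdditivePartialFlock B f g) (a b : F h) :
    lineCharacter f g a b 0 = 0 := by
  simp [lineCharacter, hF.map_zero_left, hF.map_zero_right, Tr_zero]

lemma lineCharacter_add (hF : IsAdditivePartialFlock B f g) (a b : F h) :
    ∀ s ∈ B, ∀ t ∈ B,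
      lineCharacter f g a b (s + t) = lineCharacter f g a b s + lineCharacter f g a b t := by
  intro s hs t ht
  rw [lineCharacter, hF.map_add_left s hs t ht, hF.map_add_right s hs t ht, lineCharacter,
    lineCharacter, ← Tr_add]
  congr 1
  grind

lemma ncard_mathonArc_inter_lineSet_of_ne_zero (hF : IsAdditivePartialFlock B f g)
    {u v w : F h} (hw : w ≠ 0) :
    (mathonArc (flockConics B f g) ∩ lineSet u v w).ncard =
      2 * #{t ∈ B | lineCharacter f g (u / w) (v / w) t = 1} := by
  rw [hF.isClosedConicSet.ncard_mathonArc_inter,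
    Set.singleton_inter_eq_empty.2 (mt nucleus_mem_lineSet_iff.1 hw), Set.ncard_empty, zero_add,
    flockConics, sum_image fun t _ t' _ htt' => congrArg (·.2.2) htt']
  simp only [ncard_conic_inter_lineSet_of_ne_zero hw]
  rw [sum_ite, sum_const_zero, add_zero, sum_const, smul_eq_mul, mul_comm]
  congr 2
  ext t
  simp only [mem_filter, mem_erase]
  constructor
  · rintro ⟨⟨ht0, ht⟩, hT⟩
    rw [hF.Tr_add_sq_mul_add_sq ht ht0] at hT
    exact ⟨ht, by grind⟩
  · rintro ⟨ht, hT⟩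
    have ht0 : t ≠ 0 := by
      rintro rfl
      rw [hF.lineCharacter_zero] at hT
      exact zero_ne_one hT
    rw [hF.Tr_add_sq_mul_add_sq ht ht0, hT]
    exact ⟨⟨ht0, ht⟩, rfl⟩

theorem ncard_mathonArc_inter_lineSet (hF : IsAdditivePartialFlock B f g) {u v w : F h}
    (huvw : (u, v, w) ≠ (0, 0, 0)) :
    (mathonArc (flockConics B f g) ∩ lineSet u v w).ncard = 0 ∨
      (mathonArc (flockConics B f g) ∩ lineSet u v w).ncard = #B := by
  by_cases hw : w = 0
  · subst hw
    have huv : u ≠ 0 ∨ v ≠ 0 := by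
      by_contra! huv
      exact huvw (by rw [huv.1, huv.2])
    right
    rw [hF.isClosedConicSet.ncard_mathonArc_inter_lineSet_zero huv, hF.card_flockConics]
  · rw [hF.ncard_mathonArc_inter_lineSet_of_ne_zero hw]
    exact two_mul_card_filter_eq_one hF.add_mem (hF.lineCharacter_add _ _)

end IsAdditivePartialFlock

theorem stmt5_general (h : ℕ) (B : Finset (F h))
    (hB0 : (0 : F h) ∈ B) (hBadd : ∀ s ∈ B, ∀ t ∈ B, s + t ∈ B)
    (f g : F h → F h)
    (hf : ∀ s ∈ B, ∀ t ∈ B, f (s + t) = f s + f t)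
    (hg : ∀ s ∈ B, ∀ t ∈ B, g (s + t) = g s + g t)
    (htr : ∀ s ∈ B, ∀ t ∈ B, s ≠ t →
        Tr ((f s + f t) * (g s + g t) / (s + t) ^ 2) = 1) :
    (∀ t ∈ B, t ≠ 0 → Tr (f t / t * (g t / t)) = 1) ∧
    (∀ s ∈ B, ∀ t ∈ B, s ≠ 0 → t ≠ 0 → s ≠ t →
        (s * (f s / s) + t * (f t / t)) / (s + t) = f (s + t) / (s + t) ∧
        (s * (g s / s) + t * (g t / t)) / (s + t) = g (s + t) / (s + t)) ∧
    IsClosedConicSet ((B.erase 0).image fun t => (f t / t, g t / t, t)) ∧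
    (∀ u v w : F h, (u, v, w) ≠ (0, 0, 0) →
        (mathonArc ((B.erase 0).image fun t => (f t / t, g t / t, t)) ∩
            lineSet u v w).ncard = 0 ∨
        (mathonArc ((B.erase 0).image fun t => (f t / t, g t / t, t)) ∩
            lineSet u v w).ncard = B.card) := by
  have hF : IsAdditivePartialFlock B f g := ⟨hB0, hBadd, hf, hg, htr⟩
  exact ⟨fun t ht ht0 => hF.Tr_div_mul_div ht ht0,
    fun s hs t ht hs0 ht0 _ => ⟨mul_div_add_mul_div_of_map_add hf hs ht hs0 ht0,
      mul_div_add_mul_div_of_map_add hg hs ht hs0 ht0⟩,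
    hF.isClosedConicSet, fun u v w huvw => hF.ncard_mathonArc_inter_lineSet huvw⟩

theorem stmt5 (h : ℕ) (hh : h ≠ 0) (B : Finset (F h))
    (hB0 : (0 : F h) ∈ B) (hBadd : ∀ s ∈ B, ∀ t ∈ B, s + t ∈ B)
    (f g : F h → F h)
    (hf : ∀ s ∈ B, ∀ t ∈ B, f (s + t) = f s + f t)
    (hg : ∀ s ∈ B, ∀ t ∈ B, g (s + t) = g s + g t)
    (htr : ∀ s ∈ B, ∀ t ∈ B, s ≠ t →
        Tr ((f s + f t) * (g s + g t) / (s + t) ^ 2) = 1) :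
    (∀ t ∈ B, t ≠ 0 → Tr (f t / t * (g t / t)) = 1) ∧
    (∀ s ∈ B, ∀ t ∈ B, s ≠ 0 → t ≠ 0 → s ≠ t →
        (s * (f s / s) + t * (f t / t)) / (s + t) = f (s + t) / (s + t) ∧
        (s * (g s / s) + t * (g t / t)) / (s + t) = g (s + t) / (s + t)) ∧
    IsClosedConicSet ((B.erase 0).image fun t => (f t / t, g t / t, t)) ∧
    (∀ u v w : F h, (u, v, w) ≠ (0, 0, 0) →
        (mathonArc ((B.erase 0).image fun t => (f t / t, g t / t, t)) ∩
            lineSet u v w).ncard = 0 ∨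
        (mathonArc ((B.erase 0).image fun t => (f t / t, g t / t, t)) ∩
            lineSet u v w).ncard = B.card) :=
  stmt5_general h B hB0 hBadd f g hf hg htr
end
end

section
/- Let α, β ∈ F and λ ∈ F*, and let V be the plane λX0 + αX1 + (λ+1)X2 + βX3 = 0 in PG(3,q). Then: (a) the image of V under the projectivity δ : (x0,x1,x2,x3) ↦ (x0 + x2, x1, x2, x3) (which fixes the cone K) is the plane V' : λX0 + αX1 + X2 + βX3 = 0, and V' meets the nuclear line N in the point (1,0,λ,0); (b) the plane spanned by the line V' ∩ {X0 = 0} and the point (1,0,1/λ,0) is W : X0 + αλX1 + λX2 + βλX3 = 0; (c) the image of W under the Frobenius collineation κ : (x0,x1,x2,x3) ↦ (x0², x1², x2², x3²) (which also fixes K) is the plane X0 + α²λ²X1 + λ²X2 + β²λ²X3 = 0, i.e., the additive (Hamilton–Thas) flock plane associated with the conic α²X1² + X1X3 + β²X3² + λ²X2² = 0. -/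
/-!
STATEMENT 8: The geometric link between the conic planes and the additive
(Hamilton–Thas) flock planes.  The projectivity `δ : x0 ↦ x0 + x2` (fixing the
cone `K`) maps the conic plane `V : λX0 + αX1 + (λ+1)X2 + βX3 = 0` to
`V' : λX0 + αX1 + X2 + βX3 = 0`, which meets the nuclear line in `(1,0,λ,0)`;
the plane spanned by `V' ∩ {X0 = 0}` and the inverted point `(1,0,1/λ,0)` is
`W : X0 + αλX1 + λX2 + βλX3 = 0`; and the Frobenius collineation `κ` (also
fixing `K`) maps `W` to `X0 + α²λ²X1 + λ²X2 + β²λ²X3 = 0`, the additive flock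
plane associated with the conic `α²X1² + X1X3 + β²X3² + λ²X2² = 0`.
-/

open Projectivization

noncomputable section

/-- Points of the projective space `PG(3, 2^h)`. -/
abbrev Pt3 (h : ℕ) := Projectivization (F h) (Fin 4 → F h)

/-- The quadratic cone `K : X1X3 = X2²` with vertex `(1,0,0,0)`. -/
def cone {h : ℕ} : Set (Pt3 h) :=
  {P | P.rep 1 * P.rep 3 = P.rep 2 ^ 2}

/-- The plane `aX0 + bX1 + cX2 + dX3 = 0` of `PG(3,q)`. -/
def planeSet {h : ℕ} (a b c d : F h) : Set (Pt3 h) :=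
  {P | a * P.rep 0 + b * P.rep 1 + c * P.rep 2 + d * P.rep 3 = 0}

/-- The nuclear line `N : X1 = X3 = 0` of the cone. -/
def nuclearLine {h : ℕ} : Set (Pt3 h) :=
  {P | P.rep 1 = 0 ∧ P.rep 3 = 0}

/-- The projectivity `δ : (x0,x1,x2,x3) ↦ (x0 + x2, x1, x2, x3)` of `PG(3,q)`. -/
def dmap {h : ℕ} (P : Pt3 h) : Pt3 h :=
  Projectivization.mk (F h) ![P.rep 0 + P.rep 2, P.rep 1, P.rep 2, P.rep 3] (by
    intro hcon
    apply P.rep_nonzero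
    have h0 := congrFun hcon 0
    have h1 := congrFun hcon 1
    have h2 := congrFun hcon 2
    have h3 := congrFun hcon 3
    simp at h0 h1 h2 h3
    funext i
    fin_cases i <;> simp_all)

/-- The Frobenius collineation `κ : (x0,x1,x2,x3) ↦ (x0²,x1²,x2²,x3²)`. -/
def kmap {h : ℕ} (P : Pt3 h) : Pt3 h :=
  Projectivization.mk (F h) ![P.rep 0 ^ 2, P.rep 1 ^ 2, P.rep 2 ^ 2, P.rep 3 ^ 2] (by
    intro hcon
    apply P.rep_nonzero
    have h0 := congrFun hcon 0
    have h1 := congrFun hcon 1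
    have h2 := congrFun hcon 2
    have h3 := congrFun hcon 3
    simp [pow_eq_zero_iff] at h0 h1 h2 h3
    funext i
    fin_cases i <;> simp_all)


section Helpers

variable {h : ℕ}

lemma htwo : (2 : F h) = 0 := CharTwo.two_eq_zero

lemma sq_surj (x : F h) : ∃ y : F h, y ^ 2 = x :=
  ⟨(frobeniusEquiv (F h) 2).symm x, by
    simpa [frobenius_def] using (frobeniusEquiv (F h) 2).apply_symm_apply x⟩

lemma sq_inj {x y : F h} (hxy : x ^ 2 = y ^ 2) : x = y := by
  have := frobenius_inj (F h) 2 (a₁ := x) (a₂ := y) (by simpa [frobenius_def] using hxy)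
  exact this

lemma sq_add4 (a b c d : F h) : (a + b + c + d) ^ 2 = a ^ 2 + b ^ 2 + c ^ 2 + d ^ 2 := by
  rw [add_pow_char, add_pow_char, add_pow_char]

lemma rep_mk_eq (v : Fin 4 → F h) (hv : v ≠ 0) :
    ∃ c : F h, c ≠ 0 ∧ ∀ i, (Projectivization.mk (F h) v hv).rep i = c * v i := by
  obtain ⟨a, ha⟩ := Projectivization.exists_smul_eq_mk_rep (F h) v hv
  exact ⟨a, a.ne_zero, fun i => by rw [← ha]; rfl⟩

lemma mem_planeSet_mk {a b c d : F h} (v : Fin 4 → F h) (hv : v ≠ 0) :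
    Projectivization.mk (F h) v hv ∈ planeSet a b c d ↔
      a * v 0 + b * v 1 + c * v 2 + d * v 3 = 0 := by
  obtain ⟨e, he, hrep⟩ := rep_mk_eq v hv
  simp only [planeSet, Set.mem_setOf_eq, hrep]
  rw [show a * (e * v 0) + b * (e * v 1) + c * (e * v 2) + d * (e * v 3)
      = e * (a * v 0 + b * v 1 + c * v 2 + d * v 3) by ring]
  simp [he]

lemma mem_cone_mk (v : Fin 4 → F h) (hv : v ≠ 0) :
    Projectivization.mk (F h) v hv ∈ cone ↔ v 1 * v 3 = v 2 ^ 2 := by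
  obtain ⟨e, he, hrep⟩ := rep_mk_eq v hv
  simp only [cone, Set.mem_setOf_eq, hrep]
  rw [show e * v 1 * (e * v 3) = e ^ 2 * (v 1 * v 3) by ring,
    show (e * v 2) ^ 2 = e ^ 2 * v 2 ^ 2 by ring,
    mul_right_inj' (pow_ne_zero 2 he)]

lemma mem_nuclear_mk (v : Fin 4 → F h) (hv : v ≠ 0) :
    Projectivization.mk (F h) v hv ∈ nuclearLine ↔ v 1 = 0 ∧ v 3 = 0 := by
  obtain ⟨e, he, hrep⟩ := rep_mk_eq v hv
  simp [nuclearLine, hrep, he]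

lemma d_ne (v : Fin 4 → F h) (hv : v ≠ 0) :
    ![v 0 + v 2, v 1, v 2, v 3] ≠ 0 := by
  intro hcon
  apply hv
  have h0 := congrFun hcon 0
  have h1 := congrFun hcon 1
  have h2 := congrFun hcon 2
  have h3 := congrFun hcon 3
  simp at h0 h1 h2 h3
  funext i
  fin_cases i <;> simp_all

lemma k_ne (v : Fin 4 → F h) (hv : v ≠ 0) :
    ![v 0 ^ 2, v 1 ^ 2, v 2 ^ 2, v 3 ^ 2] ≠ 0 := by
  intro hcon
  apply hv
  have h0 := congrFun hcon 0
  have h1 := congrFun hcon 1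
  have h2 := congrFun hcon 2
  have h3 := congrFun hcon 3
  simp [pow_eq_zero_iff] at h0 h1 h2 h3
  funext i
  fin_cases i <;> simp_all

lemma dmap_eq (P : Pt3 h) :
    dmap P = Projectivization.mk (F h) ![P.rep 0 + P.rep 2, P.rep 1, P.rep 2, P.rep 3]
      (d_ne _ P.rep_nonzero) := rfl

lemma kmap_eq (P : Pt3 h) :
    kmap P = Projectivization.mk (F h) ![P.rep 0 ^ 2, P.rep 1 ^ 2, P.rep 2 ^ 2, P.rep 3 ^ 2]
      (k_ne _ P.rep_nonzero) := rfl

lemma dmap_mk (v : Fin 4 → F h) (hv : v ≠ 0) :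
    dmap (Projectivization.mk (F h) v hv)
      = Projectivization.mk (F h) ![v 0 + v 2, v 1, v 2, v 3] (d_ne v hv) := by
  obtain ⟨e, he, hrep⟩ := rep_mk_eq v hv
  rw [dmap_eq]
  apply (Projectivization.mk_eq_mk_iff' (F h) _ _ _ _).2
  refine ⟨e, ?_⟩
  funext i
  fin_cases i <;> simp [hrep] <;> ring

lemma kmap_mk (v : Fin 4 → F h) (hv : v ≠ 0) :
    kmap (Projectivization.mk (F h) v hv)
      = Projectivization.mk (F h) ![v 0 ^ 2, v 1 ^ 2, v 2 ^ 2, v 3 ^ 2] (k_ne v hv) := by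
  obtain ⟨e, he, hrep⟩ := rep_mk_eq v hv
  rw [kmap_eq]
  apply (Projectivization.mk_eq_mk_iff' (F h) _ _ _ _).2
  refine ⟨e ^ 2, ?_⟩
  funext i
  fin_cases i <;> simp [hrep] <;> ring

lemma dmap_invol : Function.Involutive (dmap (h := h)) := by
  intro P
  rw [dmap_eq P, dmap_mk]
  conv_rhs => rw [← Projectivization.mk_rep P]
  apply (Projectivization.mk_eq_mk_iff' (F h) _ _ _ _).2
  refine ⟨1, ?_⟩
  funext i
  fin_cases i <;> simp [add_assoc, CharTwo.add_self_eq_zero]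

lemma invol_image (f : Pt3 h → Pt3 h) (hf : Function.Involutive f) (S T : Set (Pt3 h))
    (hmem : ∀ P, f P ∈ T ↔ P ∈ S) : f '' S = T := by
  ext Q
  constructor
  · rintro ⟨P, hP, rfl⟩
    exact (hmem P).2 hP
  · intro hQ
    exact ⟨f Q, (hmem (f Q)).1 (by rwa [hf Q]), hf Q⟩

end Helpers

theorem stmt8 (h : ℕ) (hh : h ≠ 0) (α β lam : F h) (hlam : lam ≠ 0) :
    -- `δ` and `κ` fix the cone `K`
    dmap '' (cone (h := h)) = cone ∧ kmap '' (cone (h := h)) = cone ∧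
    -- (a)
    dmap '' planeSet lam α (lam + 1) β = planeSet lam α 1 β ∧
    planeSet lam α 1 β ∩ nuclearLine =
      {Projectivization.mk (F h) ![1, 0, lam, 0] (by
        intro hcon; simpa using congrFun hcon 0)} ∧
    -- (b): the plane spanned by the line `V' ∩ {X0 = 0}` and `(1,0,1/λ,0)` is `W`
    (planeSet lam α 1 β ∩ planeSet 1 0 0 0 ⊆ planeSet 1 (α * lam) lam (β * lam) ∧
      Projectivization.mk (F h) ![1, 0, lam⁻¹, 0] (by
        intro hcon; simpa using congrFun hcon 0) ∈
          planeSet 1 (α * lam) lam (β * lam) ∧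
      ∀ a b c d : F h, (a, b, c, d) ≠ (0, 0, 0, 0) →
        planeSet lam α 1 β ∩ planeSet 1 0 0 0 ⊆ planeSet a b c d →
        Projectivization.mk (F h) ![1, 0, lam⁻¹, 0] (by
          intro hcon; simpa using congrFun hcon 0) ∈ planeSet a b c d →
        planeSet a b c d = planeSet 1 (α * lam) lam (β * lam)) ∧
    -- (c)
    kmap '' planeSet 1 (α * lam) lam (β * lam) =
      planeSet 1 (α ^ 2 * lam ^ 2) (lam ^ 2) (β ^ 2 * lam ^ 2) := by
  have htwo' : (2 : F h) = 0 := htwo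
  refine ⟨?_, ?_, ?_, ?_, ⟨?_, ?_, ?_⟩, ?_⟩
  · -- dmap fixes the cone
    apply invol_image _ dmap_invol
    intro P
    rw [dmap_eq P, mem_cone_mk]
    simp [cone, Set.mem_setOf_eq]
  · -- kmap fixes the cone
    ext Q
    constructor
    · rintro ⟨P, hP, rfl⟩
      rw [kmap_eq P, mem_cone_mk]
      simp only [Matrix.cons_val_zero, Matrix.cons_val_one, Matrix.cons_val_two, Matrix.cons_val_three, Matrix.head_cons, Matrix.tail_cons]
      simp only [cone, Set.mem_setOf_eq] at hP
      linear_combination (P.rep 1 * P.rep 3 + P.rep 2 ^ 2) * hP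
    · intro hQ
      simp only [cone, Set.mem_setOf_eq] at hQ
      choose v hv using fun i => sq_surj (Q.rep i)
      have hvne : v ≠ 0 := by
        intro H
        apply Q.rep_nonzero
        funext i
        rw [← hv i, congrFun H i]
        simp
      refine ⟨Projectivization.mk (F h) v hvne, ?_, ?_⟩
      · rw [mem_cone_mk]
        apply sq_inj
        rw [mul_pow, hv 1, hv 3, ← pow_mul, pow_mul, hv 2]
        exact hQ
      · rw [kmap_mk]
        conv_rhs => rw [← Projectivization.mk_rep Q]
        apply (Projectivization.mk_eq_mk_iff' (F h) _ _ _ _).2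
        refine ⟨1, ?_⟩
        funext i
        fin_cases i <;> simp [hv 0, hv 1, hv 2, hv 3]
  · -- dmap maps V to V'
    apply invol_image _ dmap_invol
    intro P
    rw [dmap_eq P, mem_planeSet_mk]
    simp only [planeSet, Set.mem_setOf_eq, Matrix.cons_val_zero, Matrix.cons_val_one, Matrix.cons_val_two, Matrix.cons_val_three, Matrix.head_cons, Matrix.tail_cons]
    constructor <;> intro H <;> linear_combination H
  · -- the intersection with the nuclear line
    ext Q
    simp only [Set.mem_inter_iff, Set.mem_singleton_iff]
    constructor
    · rintro ⟨hpl, hn1, hn3⟩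
      simp only [planeSet, Set.mem_setOf_eq] at hpl
      have hx2 : Q.rep 2 = lam * Q.rep 0 := by
        linear_combination hpl - α * hn1 - β * hn3 - lam * Q.rep 0 * htwo'
      have hx0 : Q.rep 0 ≠ 0 := by
        intro h0
        apply Q.rep_nonzero
        funext i
        fin_cases i <;> simp_all
      conv_lhs => rw [← Projectivization.mk_rep Q]
      apply (Projectivization.mk_eq_mk_iff' (F h) _ _ _ _).2
      refine ⟨Q.rep 0, ?_⟩
      funext i
      fin_cases i <;> simp [hx2, hn1, hn3, mul_comm]
    · rintro rfl
      refine ⟨?_, ?_⟩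
      · rw [mem_planeSet_mk]
        simp [CharTwo.add_self_eq_zero]
      · rw [mem_nuclear_mk]
        simp
  · -- (b) the line lies in W
    rintro P ⟨h1, h2⟩
    simp only [planeSet, Set.mem_setOf_eq] at h1 h2 ⊢
    linear_combination lam * h1 + (1 - lam ^ 2) * h2
  · -- (b) the inverted point lies in W
    rw [mem_planeSet_mk]
    simp [mul_inv_cancel₀ hlam, CharTwo.add_self_eq_zero]
  · -- (b) uniqueness of the plane W
    intro a b c d hne hsub hpt
    have hP1ne : (![0, 1, α, 0] : Fin 4 → F h) ≠ 0 := by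
      intro H; simpa using congrFun H 1
    have hP2ne : (![0, 0, β, 1] : Fin 4 → F h) ≠ 0 := by
      intro H; simpa using congrFun H 3
    have hP1mem : Projectivization.mk (F h) ![0, 1, α, 0] hP1ne ∈
        planeSet lam α 1 β ∩ planeSet 1 0 0 0 := by
      constructor <;> rw [mem_planeSet_mk] <;> simp [CharTwo.add_self_eq_zero]
    have hP2mem : Projectivization.mk (F h) ![0, 0, β, 1] hP2ne ∈
        planeSet lam α 1 β ∩ planeSet 1 0 0 0 := by
      constructor <;> rw [mem_planeSet_mk] <;> simp [CharTwo.add_self_eq_zero]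
    have hP1 := (mem_planeSet_mk _ hP1ne).1 (hsub hP1mem)
    have hP2 := (mem_planeSet_mk _ hP2ne).1 (hsub hP2mem)
    have hP3 := (mem_planeSet_mk _ _).1 hpt
    simp only [Matrix.cons_val_zero, Matrix.cons_val_one, Matrix.cons_val_two, Matrix.cons_val_three, Matrix.head_cons, Matrix.tail_cons, mul_zero, mul_one, zero_add, add_zero] at hP1 hP2 hP3
    have hb : b = c * α := by linear_combination hP1 - c * α * htwo'
    have hd : d = c * β := by linear_combination hP2 - c * β * htwo'
    have ha : a = c * lam⁻¹ := by linear_combination hP3 - c * lam⁻¹ * htwo'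
    have hc : c ≠ 0 := by
      intro hc0
      apply hne
      rw [hc0] at ha hb hd
      simp_all
    have hcl : c * lam⁻¹ ≠ 0 := mul_ne_zero hc (inv_ne_zero hlam)
    have key : ∀ P : Pt3 h, a * P.rep 0 + b * P.rep 1 + c * P.rep 2 + d * P.rep 3
        = (c * lam⁻¹) * (1 * P.rep 0 + α * lam * P.rep 1 + lam * P.rep 2 + β * lam * P.rep 3) := by
      intro P
      rw [ha, hb, hd]
      field_simp
    ext P
    simp only [planeSet, Set.mem_setOf_eq]
    rw [key P, mul_eq_zero]
    simp [hcl]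
  · -- (c) kmap maps W to the additive flock plane
    ext Q
    constructor
    · rintro ⟨P, hP, rfl⟩
      rw [kmap_eq P, mem_planeSet_mk]
      simp only [planeSet, Set.mem_setOf_eq] at hP
      simp only [Matrix.cons_val_zero, Matrix.cons_val_one, Matrix.cons_val_two, Matrix.cons_val_three, Matrix.head_cons, Matrix.tail_cons]
      have h2 : (1 * P.rep 0 + α * lam * P.rep 1 + lam * P.rep 2 + β * lam * P.rep 3) ^ 2
          = 0 ^ 2 := by rw [hP]
      rw [sq_add4] at h2
      linear_combination h2
    · intro hQ
      simp only [planeSet, Set.mem_setOf_eq] at hQ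
      choose v hv using fun i => sq_surj (Q.rep i)
      have hvne : v ≠ 0 := by
        intro H
        apply Q.rep_nonzero
        funext i
        rw [← hv i, congrFun H i]
        simp
      refine ⟨Projectivization.mk (F h) v hvne, ?_, ?_⟩
      · rw [mem_planeSet_mk]
        rw [← sq_eq_zero_iff (a := 1 * v 0 + α * lam * v 1 + lam * v 2 + β * lam * v 3)]
        rw [sq_add4]
        have : (1 * v 0) ^ 2 + (α * lam * v 1) ^ 2 + (lam * v 2) ^ 2 + (β * lam * v 3) ^ 2
            = 1 * Q.rep 0 + α ^ 2 * lam ^ 2 * Q.rep 1 + lam ^ 2 * Q.rep 2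
              + β ^ 2 * lam ^ 2 * Q.rep 3 := by
          rw [← hv 0, ← hv 1, ← hv 2, ← hv 3]
          ring
        rw [this, hQ]
      · rw [kmap_mk]
        conv_rhs => rw [← Projectivization.mk_rep Q]
        apply (Projectivization.mk_eq_mk_iff' (F h) _ _ _ _).2
        refine ⟨1, ?_⟩
        funext i
        fin_cases i <;> simp [hv 0, hv 1, hv 2, hv 3]
end
end

section
/- Let V : λX0 + αX1 + (λ+1)X2 + βX3 = 0 and W : λ'X0 + α'X1 + (λ'+1)X2 + β'X3 = 0 be planes of PG(3,q) in standard form with λ, λ' ∈ F*, λ ≠ λ', such that the conics K ∩ V and K ∩ W are disjoint, and let C1 and C2 be the projections from p = (1,0,1,0) of K ∩ V and K ∩ W onto the plane X0 = 0 (so C1 : α²X1² + X1X3 + β²X3² + λ²X2² = 0 and C2 : α'²X1² + X1X3 + β'²X3² + λ'²X2² = 0). Then the plane S : (λ+λ')X0 + (α+α')X1 + (λ+λ')X2 + (β+β')X3 = 0 obtained by summing the equations of V and W contains p; its intersection with the plane X0 = 0 is the line ℓ : (α+α')X1 + (λ+λ')X2 + (β+β')X3 = 0, whose point set equals the zero set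 of the singular conic C1 + C2 : (α²+α'²)X1² + (λ²+λ'²)X2² + (β²+β'²)X3² = 0 of the pencil spanned by C1 and C2; and ℓ contains no point of the degree-4 maximal arc of Denniston type determined by V and W (ℓ is its line at infinity). -/
/-!
In characteristic 2 the sum of the quadratic forms of `C1` and `C2` is the square of the linear
form of `ℓ`, so `C1` and `C2` agree on `ℓ`; and `(λ+λ')²·(C1 ⊕ C2) = λ²·C1 + λ'²·C2`, so `C1 ⊕ C2`
agrees with them there too. A point `P` of `ℓ` on the arc is therefore on both `C1` and `C2` (it
is not the nucleus, as `λ ≠ λ'`). Projection from `p` is inverted by `P ↦ P + c·p`, where `c`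
is read off the plane equation; on `ℓ` the planes `V` and `W` give the same `c`, so this point
lies on `K ∩ V` and `K ∩ W`, contradicting their disjointness.
-/

open Projectivization

noncomputable section

/-- The point `p = (1,0,1,0)` of the nuclear line of the cone. -/
def pPoint {h : ℕ} : Pt3 h :=
  Projectivization.mk (F h) ![1, 0, 1, 0] (by
    intro hcon; simpa using congrFun hcon 0)

/-- The point `n = (0,0,1,0)`, the common nucleus in the plane `X0 = 0`. -/
def nucleus4 {h : ℕ} : Pt3 h :=
  Projectivization.mk (F h) ![0, 0, 1, 0] (by
    intro hcon; simpa using congrFun hcon 2)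

/-- The conic `{(0,x1,x2,x3) : α²x1² + x1x3 + β²x3² + λ²x2² = 0}` lying in the
plane `X0 = 0` of `PG(3,q)`. -/
def planeConic {h : ℕ} (α β lam : F h) : Set (Pt3 h) :=
  {P | P.rep 0 = 0 ∧
    α ^ 2 * P.rep 1 ^ 2 + P.rep 1 * P.rep 3 + β ^ 2 * P.rep 3 ^ 2 +
      lam ^ 2 * P.rep 2 ^ 2 = 0}


section CommRing

variable {K : Type*} [CommRing K]

def conicForm (α β lam x₁ x₂ x₃ : K) : K :=
  α ^ 2 * x₁ ^ 2 + x₁ * x₃ + β ^ 2 * x₃ ^ 2 + lam ^ 2 * x₂ ^ 2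

variable [CharP K 2]

theorem linear_form_sq (a b c x y z : K) :
    (a * x + b * y + c * z) ^ 2 = a ^ 2 * x ^ 2 + b ^ 2 * y ^ 2 + c ^ 2 * z ^ 2 := by
  simp only [CharTwo.add_sq, mul_pow]

theorem conicForm_add_conicForm (α β lam α' β' lam' x₁ x₂ x₃ : K) :
    conicForm α β lam x₁ x₂ x₃ + conicForm α' β' lam' x₁ x₂ x₃ =
      ((α + α') * x₁ + (lam + lam') * x₂ + (β + β') * x₃) ^ 2 := by
  rw [linear_form_sq, CharTwo.add_sq, CharTwo.add_sq, CharTwo.add_sq]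
  unfold conicForm
  linear_combination x₁ * x₃ * CharTwo.two_eq_zero (R := K)

theorem conicForm_eq_of_linear_form_eq_zero {α β lam α' β' lam' x₁ x₂ x₃ : K}
    (hL : (α + α') * x₁ + (lam + lam') * x₂ + (β + β') * x₃ = 0) :
    conicForm α' β' lam' x₁ x₂ x₃ = conicForm α β lam x₁ x₂ x₃ := by
  rw [eq_comm, ← CharTwo.add_eq_zero, conicForm_add_conicForm, hL, zero_pow two_ne_zero]

theorem conicForm_lift {α β lam c x₁ x₂ x₃ : K} (hc : c = α * x₁ + (lam + 1) * x₂ + β * x₃)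
    (hQ : conicForm α β lam x₁ x₂ x₃ = 0) :
    x₁ * x₃ = (x₂ + c) ^ 2 ∧ lam * c + α * x₁ + (lam + 1) * (x₂ + c) + β * x₃ = 0 := by
  have two : (2 : K) = 0 := CharTwo.two_eq_zero
  unfold conicForm at hQ
  constructor
  · rw [hc, CharTwo.add_sq, linear_form_sq]
    linear_combination -hQ + (x₁ * x₃ - (lam + 1) * x₂ ^ 2) * two
  · linear_combination -hc + (lam + 1) * c * two

end CommRing

section Field

variable {K : Type*} [Field K] [CharP K 2]

theorem sq_mul_conicForm_div {α β lam α' β' lam' x₁ x₂ x₃ : K} (hμ : lam + lam' ≠ 0) :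
    (lam + lam') ^ 2 * conicForm ((α * lam + α' * lam') / (lam + lam'))
        ((β * lam + β' * lam') / (lam + lam')) (lam + lam') x₁ x₂ x₃ =
      lam ^ 2 * conicForm α β lam x₁ x₂ x₃ + lam' ^ 2 * conicForm α' β' lam' x₁ x₂ x₃ := by
  have h4 : (lam + lam') ^ 4 = lam ^ 4 + lam' ^ 4 := by
    rw [show 4 = 2 * 2 from rfl, pow_mul, pow_mul, pow_mul, CharTwo.add_sq, CharTwo.add_sq]
  unfold conicForm
  field_simp
  rw [h4, CharTwo.add_sq, CharTwo.add_sq, CharTwo.add_sq]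
  ring

theorem conicForm_div_eq_of_linear_form_eq_zero {α β lam α' β' lam' x₁ x₂ x₃ : K}
    (hμ : lam + lam' ≠ 0) (hL : (α + α') * x₁ + (lam + lam') * x₂ + (β + β') * x₃ = 0) :
    conicForm ((α * lam + α' * lam') / (lam + lam')) ((β * lam + β' * lam') / (lam + lam'))
        (lam + lam') x₁ x₂ x₃ = conicForm α β lam x₁ x₂ x₃ := by
  refine mul_left_cancel₀ (pow_ne_zero 2 hμ) ?_
  rw [sq_mul_conicForm_div hμ, conicForm_eq_of_linear_form_eq_zero hL, CharTwo.add_sq]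
  ring

end Field

theorem add_smul_ne_zero_of_apply_eq_zero {ι K : Type*} [Semiring K] {x v : ι → K} {i : ι}
    (hx : x ≠ 0) (hxi : x i = 0) (hvi : v i = 1) (c : K) : x + c • v ≠ 0 := by
  intro H
  have hc : c = 0 := by simpa [hxi, hvi] using congrFun H i
  exact hx (by simpa [hc] using H)

theorem Projectivization.exists_rep_mk_eq {K ι : Type*} [DivisionRing K] (v : ι → K)
    (hv : v ≠ 0) : ∃ u : Kˣ, ∀ i, (mk K v hv).rep i = u * v i := by
  obtain ⟨u, hu⟩ := exists_smul_eq_mk_rep K v hv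
  exact ⟨u, fun i => by rw [← hu]; rfl⟩

section Projective

variable {h : ℕ}

theorem mk_mem_planeSet_iff {a b c d : F h} (v : Fin 4 → F h) (hv : v ≠ 0) :
    mk (F h) v hv ∈ planeSet a b c d ↔ a * v 0 + b * v 1 + c * v 2 + d * v 3 = 0 := by
  obtain ⟨u, hu⟩ := exists_rep_mk_eq v hv
  calc mk (F h) v hv ∈ planeSet a b c d
      ↔ (u : F h) * (a * v 0 + b * v 1 + c * v 2 + d * v 3) = 0 := by
        simp only [planeSet, Set.mem_ofPred_eq, hu]
        ring_nf
    _ ↔ _ := mul_eq_zero_iff_left u.ne_zero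

theorem mk_mem_cone_iff (v : Fin 4 → F h) (hv : v ≠ 0) :
    mk (F h) v hv ∈ cone ↔ v 1 * v 3 = v 2 ^ 2 := by
  obtain ⟨u, hu⟩ := exists_rep_mk_eq v hv
  calc mk (F h) v hv ∈ cone ↔ (u : F h) ^ 2 * (v 1 * v 3) = u ^ 2 * v 2 ^ 2 := by
        simp only [cone, Set.mem_ofPred_eq, hu]
        ring_nf
    _ ↔ _ := mul_right_inj' (pow_ne_zero 2 u.ne_zero)

theorem pPoint_mem_planeSet (a b d : F h) : pPoint ∈ planeSet a b a d := by
  rw [pPoint, mk_mem_planeSet_iff]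
  simp [CharTwo.add_self_eq_zero]

def lineInPlaneX0 (b c d : F h) : Set (Pt3 h) :=
  {P | P.rep 0 = 0 ∧ b * P.rep 1 + c * P.rep 2 + d * P.rep 3 = 0}

theorem planeSet_inter_planeSet_X0 (a b c d : F h) :
    planeSet a b c d ∩ planeSet 1 0 0 0 = lineInPlaneX0 b c d := by
  ext P
  simp only [planeSet, lineInPlaneX0, Set.mem_inter_iff, Set.mem_ofPred_eq]
  constructor <;> rintro ⟨h₁, h₂⟩ <;> simp_all

theorem lineInPlaneX0_eq_sq (b c d : F h) :
    lineInPlaneX0 b c d = {P : Pt3 h | P.rep 0 = 0 ∧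
      b ^ 2 * P.rep 1 ^ 2 + c ^ 2 * P.rep 2 ^ 2 + d ^ 2 * P.rep 3 ^ 2 = 0} := by
  ext P
  simp only [lineInPlaneX0, Set.mem_ofPred_eq, ← linear_form_sq, pow_eq_zero_iff two_ne_zero]

theorem nucleus4_not_mem_lineInPlaneX0 {b c d : F h} (hc : c ≠ 0) :
    nucleus4 ∉ lineInPlaneX0 b c d := by
  rintro ⟨-, hL⟩
  obtain ⟨u, hu⟩ := exists_rep_mk_eq (K := F h) ![0, 0, 1, 0] (by simp)
  simp only [nucleus4, hu] at hL
  simp [hc] at hL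

def dennistonArc (α β lam α' β' lam' : F h) : Set (Pt3 h) :=
  planeConic α β lam ∪ planeConic α' β' lam' ∪
    planeConic ((α * lam + α' * lam') / (lam + lam'))
      ((β * lam + β' * lam') / (lam + lam')) (lam + lam') ∪
    {nucleus4}

theorem conicForm_eq_zero_of_mem_dennistonArc {α β lam α' β' lam' : F h} {P : Pt3 h}
    (hμ : lam + lam' ≠ 0) (hℓ : P ∈ lineInPlaneX0 (α + α') (lam + lam') (β + β'))
    (hP : P ∈ dennistonArc α β lam α' β' lam') :
    conicForm α β lam (P.rep 1) (P.rep 2) (P.rep 3) = 0 := by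
  rcases hP with ((⟨-, hC₁⟩ | ⟨-, hC₂⟩) | ⟨-, hC₃⟩) | hn
  · exact hC₁
  · rwa [← conicForm_eq_of_linear_form_eq_zero hℓ.2]
  · rwa [← conicForm_div_eq_of_linear_form_eq_zero hμ hℓ.2]
  · exact absurd (hn ▸ hℓ) (nucleus4_not_mem_lineInPlaneX0 hμ)

theorem mk_add_smul_mem_cone_inter_planeSet {α β lam c : F h} {P : Pt3 h} (hP₀ : P.rep 0 = 0)
    (hc : c = α * P.rep 1 + (lam + 1) * P.rep 2 + β * P.rep 3)
    (hQ : conicForm α β lam (P.rep 1) (P.rep 2) (P.rep 3) = 0) :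
    mk (F h) (P.rep + c • ![1, 0, 1, 0])
        (add_smul_ne_zero_of_apply_eq_zero P.rep_nonzero hP₀ rfl c) ∈
      cone ∩ planeSet lam α (lam + 1) β := by
  obtain ⟨hcone, hplane⟩ := conicForm_lift hc hQ
  rw [Set.mem_inter_iff, mk_mem_cone_iff, mk_mem_planeSet_iff]
  simp only [Pi.add_apply, Pi.smul_apply, smul_eq_mul, Matrix.cons_val_zero, Matrix.cons_val_one,
    Matrix.cons_val, mul_one, mul_zero, add_zero, zero_add, hP₀]
  exact ⟨hcone, by linear_combination hplane⟩

theorem disjoint_lineInPlaneX0_dennistonArc {α β lam α' β' lam' : F h} (hll : lam ≠ lam')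
    (hdisj : Disjoint (cone ∩ planeSet lam α (lam + 1) β)
      (cone ∩ planeSet lam' α' (lam' + 1) β')) :
    Disjoint (lineInPlaneX0 (α + α') (lam + lam') (β + β')) (dennistonArc α β lam α' β' lam') := by
  have hμ : lam + lam' ≠ 0 := mt CharTwo.add_eq_zero.mp hll
  refine Set.disjoint_left.mpr fun P hℓ hP => ?_
  have hQ := conicForm_eq_zero_of_mem_dennistonArc hμ hℓ hP
  have hQ' := (conicForm_eq_of_linear_form_eq_zero hℓ.2).trans hQ
  have hc : α * P.rep 1 + (lam + 1) * P.rep 2 + β * P.rep 3 =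
      α' * P.rep 1 + (lam' + 1) * P.rep 2 + β' * P.rep 3 := by
    rw [← CharTwo.add_eq_zero]
    linear_combination hℓ.2 + P.rep 2 * CharTwo.two_eq_zero (R := F h)
  exact Set.disjoint_left.mp hdisj (mk_add_smul_mem_cone_inter_planeSet hℓ.1 rfl hQ)
    (mk_add_smul_mem_cone_inter_planeSet hℓ.1 hc hQ')

end Projective

theorem stmt11_general (h : ℕ) (α β α' β' lam lam' : F h)
    (hll : lam ≠ lam')
    (hdisj : Disjoint (cone ∩ planeSet lam α (lam + 1) β)
      (cone ∩ planeSet lam' α' (lam' + 1) β')) :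
    -- the sum plane `S` contains `p = (1,0,1,0)`
    pPoint ∈ planeSet (lam + lam') (α + α') (lam + lam') (β + β') ∧
    -- `S ∩ {X0 = 0}` is the line `ℓ`
    planeSet (lam + lam') (α + α') (lam + lam') (β + β') ∩ planeSet 1 0 0 0 =
      {P : Pt3 h | P.rep 0 = 0 ∧
        (α + α') * P.rep 1 + (lam + lam') * P.rep 2 + (β + β') * P.rep 3 = 0} ∧
    -- the point set of `ℓ` is the zero set of the singular conic `C1 + C2`
    {P : Pt3 h | P.rep 0 = 0 ∧
        (α + α') * P.rep 1 + (lam + lam') * P.rep 2 + (β + β') * P.rep 3 = 0} =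
      {P : Pt3 h | P.rep 0 = 0 ∧
        (α ^ 2 + α' ^ 2) * P.rep 1 ^ 2 + (lam ^ 2 + lam' ^ 2) * P.rep 2 ^ 2 +
          (β ^ 2 + β' ^ 2) * P.rep 3 ^ 2 = 0} ∧
    -- `ℓ` contains no point of the Denniston arc determined by `V` and `W`
    Disjoint
      {P : Pt3 h | P.rep 0 = 0 ∧
        (α + α') * P.rep 1 + (lam + lam') * P.rep 2 + (β + β') * P.rep 3 = 0}
      (planeConic α β lam ∪ planeConic α' β' lam' ∪
        planeConic ((α * lam + α' * lam') / (lam + lam'))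
          ((β * lam + β' * lam') / (lam + lam')) (lam + lam') ∪
        {nucleus4}) := by
  refine ⟨pPoint_mem_planeSet _ _ _, planeSet_inter_planeSet_X0 _ _ _ _, ?_,
    disjoint_lineInPlaneX0_dennistonArc hll hdisj⟩
  simpa only [lineInPlaneX0, CharTwo.add_sq] using
    lineInPlaneX0_eq_sq (α + α') (lam + lam') (β + β')

theorem stmt11 (h : ℕ) (hh : h ≠ 0) (α β α' β' lam lam' : F h)
    (hlam : lam ≠ 0) (hlam' : lam' ≠ 0) (hll : lam ≠ lam')
    (hdisj : Disjoint (cone ∩ planeSet lam α (lam + 1) β)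
      (cone ∩ planeSet lam' α' (lam' + 1) β')) :
    -- the sum plane `S` contains `p = (1,0,1,0)`
    pPoint ∈ planeSet (lam + lam') (α + α') (lam + lam') (β + β') ∧
    -- `S ∩ {X0 = 0}` is the line `ℓ`
    planeSet (lam + lam') (α + α') (lam + lam') (β + β') ∩ planeSet 1 0 0 0 =
      {P : Pt3 h | P.rep 0 = 0 ∧
        (α + α') * P.rep 1 + (lam + lam') * P.rep 2 + (β + β') * P.rep 3 = 0} ∧
    -- the point set of `ℓ` is the zero set of the singular conic `C1 + C2`
    {P : Pt3 h | P.rep 0 = 0 ∧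
        (α + α') * P.rep 1 + (lam + lam') * P.rep 2 + (β + β') * P.rep 3 = 0} =
      {P : Pt3 h | P.rep 0 = 0 ∧
        (α ^ 2 + α' ^ 2) * P.rep 1 ^ 2 + (lam ^ 2 + lam' ^ 2) * P.rep 2 ^ 2 +
          (β ^ 2 + β' ^ 2) * P.rep 3 ^ 2 = 0} ∧
    -- `ℓ` contains no point of the Denniston arc determined by `V` and `W`
    Disjoint
      {P : Pt3 h | P.rep 0 = 0 ∧
        (α + α') * P.rep 1 + (lam + lam') * P.rep 2 + (β + β') * P.rep 3 = 0}
      (planeConic α β lam ∪ planeConic α' β' lam' ∪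
        planeConic ((α * lam + α' * lam') / (lam + lam'))
          ((β * lam + β' * lam') / (lam + lam')) (lam + lam') ∪
        {nucleus4}) :=
  stmt11_general h α β α' β' lam lam' hll hdisj
end
end

section
/- Let B ⊆ F be a finite additive subgroup and f, g : B → F additive maps satisfying Tr[((f(s) + f(t))·(g(s) + g(t)))/(s + t)²] = 1 for all distinct s, t ∈ B (an additive partial flock of K of size |B|). Let t0 ∈ F \ B and a, b ∈ F be such that Tr[((f(s) + a)·(g(s) + b))/(s + t0)²] = 1 for all s ∈ B (i.e., the plane X0 + aX1 + t0X2 + bX3 = 0, which contains neither the vertex (1,0,0,0) nor the point (0,0,1,0), cuts K in a conic disjoint from all conics of the flock). Then B' = B ∪ (t0 + B) is an additive subgroup of F of order 2|B|, and the maps f', g' : B' → F defined by f'(s) = f(s), f'(s + t0) = f(s) + a, g'(s) = g(s), g'(s + t0) = g(s) + b for s ∈ B are additive and satisfy Tr[((f'(s) + f'(t))·(g'(s) + g'(t)))/(s + t)²] = 1 for all distinct s, t ∈ B'; moreover (B', f', g') is the unique additive partial flock of size 2|B| whose conics include the |B| + 1 given conics. -/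
/-!
STATEMENT 12: Analogue of the synthetic version of Mathon's theorem for additive
partial flocks (Theorem 8 of the paper).  Given an additive partial flock
`(B, f, g)` of the cone and a further plane `X0 + aX1 + t0X2 + bX3 = 0`
(`t0 ∉ B`) cutting a conic disjoint from all conics of the flock, the set
`B' = B ∪ (t0 + B)` is an additive subgroup of order `2|B|` and the natural
extensions `f', g'` make `(B', f', g')` an additive partial flock of size
`2|B|`; moreover it is the unique additive partial flock of size `2|B|` whose
conics include the `|B| + 1` given conics.
-/

noncomputable section

theorem stmt12 (h : ℕ) (hh : h ≠ 0) (B : AddSubgroup (F h)) (f g : F h → F h)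
    (hf : ∀ s ∈ B, ∀ t ∈ B, f (s + t) = f s + f t)
    (hg : ∀ s ∈ B, ∀ t ∈ B, g (s + t) = g s + g t)
    (htr : ∀ s ∈ B, ∀ t ∈ B, s ≠ t →
        Tr ((f s + f t) * (g s + g t) / (s + t) ^ 2) = 1)
    (t0 a b : F h) (ht0 : t0 ∉ B)
    (hnew : ∀ s ∈ B, Tr ((f s + a) * (g s + b) / (s + t0) ^ 2) = 1) :
    ∃ B' : AddSubgroup (F h),
      (B' : Set (F h)) = (B : Set (F h)) ∪ ((fun s => t0 + s) '' (B : Set (F h))) ∧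
      Nat.card B' = 2 * Nat.card B ∧
      ∃ f' g' : F h → F h,
        (∀ s ∈ B, f' s = f s ∧ f' (s + t0) = f s + a ∧
            g' s = g s ∧ g' (s + t0) = g s + b) ∧
        (∀ s ∈ B', ∀ t ∈ B', f' (s + t) = f' s + f' t ∧ g' (s + t) = g' s + g' t) ∧
        (∀ s ∈ B', ∀ t ∈ B', s ≠ t →
            Tr ((f' s + f' t) * (g' s + g' t) / (s + t) ^ 2) = 1) ∧
        -- uniqueness
        ∀ B'' : AddSubgroup (F h), ∀ f'' g'' : F h → F h,
          Nat.card B'' = 2 * Nat.card B →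
          (∀ s ∈ B'', ∀ t ∈ B'',
              f'' (s + t) = f'' s + f'' t ∧ g'' (s + t) = g'' s + g'' t) →
          (∀ s ∈ B'', ∀ t ∈ B'', s ≠ t →
              Tr ((f'' s + f'' t) * (g'' s + g'' t) / (s + t) ^ 2) = 1) →
          (∀ s ∈ B, s ∈ B'' ∧ f'' s = f s ∧ g'' s = g s) →
          (t0 ∈ B'' ∧ f'' t0 = a ∧ g'' t0 = b) →
          B'' = B' ∧ ∀ s ∈ B', f'' s = f' s ∧ g'' s = g' s := by
  classical
  haveI : CharP (F h) 2 :=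
    charP_of_injective_algebraMap (algebraMap (ZMod 2) (F h)).injective 2
  have two : ∀ x : F h, x + x = 0 := fun x => CharTwo.add_self_eq_zero x
  have key : ∀ x : F h, t0 + (t0 + x) = x := fun x => by
    rw [← add_assoc, two, zero_add]
  -- the carrier set
  set S : Set (F h) := (B : Set (F h)) ∪ ((fun s => t0 + s) '' (B : Set (F h))) with hS
  have memS : ∀ x, x ∈ S ↔ x ∈ B ∨ t0 + x ∈ B := by
    intro x
    simp only [hS, Set.mem_union, Set.mem_image, SetLike.mem_coe]
    constructor
    · rintro (hx | ⟨s, hs, rfl⟩)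
      · exact Or.inl hx
      · right; rwa [key]
    · rintro (hx | hx)
      · exact Or.inl hx
      · exact Or.inr ⟨t0 + x, hx, key x⟩
  have excl : ∀ x, x ∈ B → t0 + x ∉ B := by
    intro x hx hx'
    exact ht0 (by simpa using B.sub_mem hx' hx)
  have addmem : ∀ {x y : F h}, x ∈ S → y ∈ S → x + y ∈ S := by
    intro x y hx hy
    rw [memS] at hx hy ⊢
    rcases hx with hx | hx <;> rcases hy with hy | hy
    · exact Or.inl (B.add_mem hx hy)
    · refine Or.inr ?_
      rw [show t0 + (x + y) = x + (t0 + y) by ring]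
      exact B.add_mem hx hy
    · refine Or.inr ?_
      rw [show t0 + (x + y) = (t0 + x) + y by ring]
      exact B.add_mem hx hy
    · refine Or.inl ?_
      have := B.add_mem hx hy
      rwa [show (t0 + x) + (t0 + y) = (t0 + t0) + (x + y) by ring, two,
        zero_add] at this
  set B' : AddSubgroup (F h) :=
    { carrier := S
      add_mem' := addmem
      zero_mem' := (memS 0).mpr (Or.inl B.zero_mem)
      neg_mem' := fun {x} hx => by rwa [CharTwo.neg_eq] } with hB'
  have memB' : ∀ x, x ∈ B' ↔ x ∈ B ∨ t0 + x ∈ B := memS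
  have hcardB' : Nat.card B' = 2 * Nat.card B := by
    have hdisj : Disjoint (B : Set (F h)) ((fun s => t0 + s) '' (B : Set (F h))) := by
      rw [Set.disjoint_left]
      rintro x hx ⟨s, hs, rfl⟩
      exact excl s hs hx
    have hcard : S.ncard = (B : Set (F h)).ncard +
        ((fun s => t0 + s) '' (B : Set (F h))).ncard :=
      hS ▸ Set.ncard_union_eq hdisj (Set.toFinite _) (Set.toFinite _)
    have himg : ((fun s => t0 + s) '' (B : Set (F h))).ncard = (B : Set (F h)).ncard :=
      Set.ncard_image_of_injective _ (add_right_injective t0)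
    show Nat.card S = 2 * Nat.card B
    have hBc : Nat.card B = (B : Set (F h)).ncard := by
      rw [← Nat.card_coe_set_eq]; rfl
    rw [Nat.card_coe_set_eq, hcard, himg, ← hBc, two_mul]
  -- the extension maps
  set f' : F h → F h := fun x => if x ∈ B then f x else f (t0 + x) + a with hf'
  set g' : F h → F h := fun x => if x ∈ B then g x else g (t0 + x) + b with hg'
  have f'B : ∀ x ∈ B, f' x = f x := fun x hx => if_pos hx
  have g'B : ∀ x ∈ B, g' x = g x := fun x hx => if_pos hx
  have f'T : ∀ x, x ∉ B → f' x = f (t0 + x) + a := fun x hx => if_neg hx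
  have g'T : ∀ x, x ∉ B → g' x = g (t0 + x) + b := fun x hx => if_neg hx
  refine ⟨B', rfl, hcardB', f', g', ?_, ?_, ?_, ?_⟩
  · intro s hs
    have hst : s + t0 ∉ B := fun hc => excl s hs (by rwa [add_comm] at hc)
    have hts : t0 + (s + t0) = s := by
      rw [show s + t0 = t0 + s by ring, key]
    exact ⟨f'B s hs, by rw [f'T _ hst, hts], g'B s hs, by rw [g'T _ hst, hts]⟩
  · -- additivity
    intro x hx y hy
    have hx' := (memB' x).mp hx
    have hy' := (memB' y).mp hy
    constructor
    all_goals {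
      rcases hx' with hx' | hx' <;> rcases hy' with hy' | hy'
      · simp only [hf', hg', if_pos hx', if_pos hy', if_pos (B.add_mem hx' hy')]
        first | exact hf x hx' y hy' | exact hg x hx' y hy'
      · have hxy : x + y ∉ B := fun hc => by
          have hyB : y ∈ B := by simpa using B.sub_mem hc hx'
          exact excl y hyB hy'
        simp only [hf', hg', if_pos hx', if_neg (fun hc : y ∈ B => excl y hc hy'),
          if_neg hxy, show t0 + (x + y) = x + (t0 + y) by ring]
        first
        | rw [hf x hx' (t0 + y) hy', add_assoc]
        | rw [hg x hx' (t0 + y) hy', add_assoc]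
      · have hxy : x + y ∉ B := fun hc => by
          have hxB : x ∈ B := by simpa using B.sub_mem hc hy'
          exact excl x hxB hx'
        simp only [hf', hg', if_pos hy', if_neg (fun hc : x ∈ B => excl x hc hx'),
          if_neg hxy, show t0 + (x + y) = (t0 + x) + y by ring]
        first
        | rw [hf (t0 + x) hx' y hy']; ring
        | rw [hg (t0 + x) hx' y hy']; ring
      · have hxy : x + y ∈ B := by
          have := B.add_mem hx' hy'
          rwa [show (t0 + x) + (t0 + y) = (t0 + t0) + (x + y) by ring, two,
            zero_add] at this
        simp only [hf', hg', if_pos hxy, if_neg (fun hc : x ∈ B => excl x hc hx'),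
          if_neg (fun hc : y ∈ B => excl y hc hy')]
        rw [show x + y = (t0 + x) + (t0 + y) by
          rw [show (t0 + x) + (t0 + y) = (t0 + t0) + (x + y) by ring, two,
            zero_add]]
        first
        | rw [hf (t0 + x) hx' (t0 + y) hy']
        | rw [hg (t0 + x) hx' (t0 + y) hy']
        rw [show ∀ u v w : F h, (u + w) + (v + w) = (u + v) + (w + w) from
          fun u v w => by ring, two, add_zero]
    }
  · -- trace condition
    have hmix : ∀ x ∈ B, ∀ y, t0 + y ∈ B →
        Tr ((f' x + f' y) * (g' x + g' y) / (x + y) ^ 2) = 1 := by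
      intro x hx y hy
      have hyB : y ∉ B := fun hc => excl y hc hy
      rw [f'B x hx, g'B x hx, f'T y hyB, g'T y hyB]
      have h1 : f x + (f (t0 + y) + a) = f (x + (t0 + y)) + a := by
        rw [hf x hx (t0 + y) hy]; ring
      have h2 : g x + (g (t0 + y) + b) = g (x + (t0 + y)) + b := by
        rw [hg x hx (t0 + y) hy]; ring
      have h3 : x + y = (x + (t0 + y)) + t0 := by
        rw [show (x + (t0 + y)) + t0 = x + ((t0 + t0) + y) by ring, two, zero_add]
      rw [h1, h2, h3]
      exact hnew _ (B.add_mem hx hy)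
    intro x hx y hy hxy
    have hx' := (memB' x).mp hx
    have hy' := (memB' y).mp hy
    rcases hx' with hx' | hx' <;> rcases hy' with hy' | hy'
    · rw [f'B x hx', f'B y hy', g'B x hx', g'B y hy']
      exact htr x hx' y hy' hxy
    · exact hmix x hx' y hy'
    · have := hmix y hy' x hx'
      convert this using 2
      ring
    · have huv : t0 + x ≠ t0 + y := fun hc => hxy (by
        have := congrArg (fun z => t0 + z) hc
        simpa only [key] using this)
      rw [f'T x (fun hc => excl x hc hx'), f'T y (fun hc => excl y hc hy'),
        g'T x (fun hc => excl x hc hx'), g'T y (fun hc => excl y hc hy')]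
      have h1 : (f (t0 + x) + a) + (f (t0 + y) + a) = f (t0 + x) + f (t0 + y) := by
        rw [show (f (t0+x) + a) + (f (t0+y) + a) = f (t0+x) + f (t0+y) + (a+a) by
          ring, two, add_zero]
      have h2 : (g (t0 + x) + b) + (g (t0 + y) + b) = g (t0 + x) + g (t0 + y) := by
        rw [show (g (t0+x) + b) + (g (t0+y) + b) = g (t0+x) + g (t0+y) + (b+b) by
          ring, two, add_zero]
      have h3 : x + y = (t0 + x) + (t0 + y) := by
        rw [show (t0 + x) + (t0 + y) = (t0 + t0) + (x + y) by ring, two, zero_add]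
      rw [h1, h2, h3]
      exact htr _ hx' _ hy' huv
  · -- uniqueness
    intro B'' f'' g'' hcard'' hadd'' _ hB ht
    have hle : B' ≤ B'' := by
      intro x hx
      rcases (memB' x).mp hx with hx' | hx'
      · exact (hB x hx').1
      · have := B''.add_mem ht.1 (hB _ hx').1
        rwa [key] at this
    have hBeq : B' = B'' :=
      AddSubgroup.eq_of_le_of_card_ge hle (by rw [hcard'', hcardB'])
    refine ⟨hBeq.symm, ?_⟩
    intro s hs
    by_cases hsB : s ∈ B
    · rw [f'B s hsB, g'B s hsB]
      exact ⟨(hB s hsB).2.1, (hB s hsB).2.2⟩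
    · have hts : t0 + s ∈ B := ((memB' s).mp hs).resolve_left hsB
      have hsplit : s = t0 + (t0 + s) := (key s).symm
      have hfs : f'' s = a + f (t0 + s) := by
        rw [hsplit, (hadd'' t0 ht.1 (t0 + s) (hB _ hts).1).1, ht.2.1,
          (hB _ hts).2.1, key]
      have hgs : g'' s = b + g (t0 + s) := by
        rw [hsplit, (hadd'' t0 ht.1 (t0 + s) (hB _ hts).1).2, ht.2.2,
          (hB _ hts).2.2, key]
      rw [f'T s hsB, g'T s hsB, hfs, hgs]
      exact ⟨add_comm _ _, add_comm _ _⟩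
end
end

section
/- Let G ⊆ F be an additive subgroup of order 2d (d ≥ 2) and let φ, ψ : G → F be additive maps with Tr[((φ(s) + φ(t))·(ψ(s) + ψ(t)))/(s + t)²] = 1 for all distinct s, t ∈ G (so the conics D_t : (φ(t)/t)X1² + X1X3 + (ψ(t)/t)X3² + tX2² = 0, t ∈ G \ {0}, together with the nucleus form a degree-2d maximal arc of Mathon type in the plane X0 = 0). Suppose there are a subgroup H of G of index 2 and constants α0, β0 ∈ F with φ(t) = α0·t and ψ(t) = β0·t for all t ∈ H (so the sub-arc on H is of Denniston type of degree d). Then all Denniston lines of the arc are concurrent: there exists a nonzero triple (z1, z2, z3) ∈ F³ such that (φ(t)/t + φ(t')/t')·z1 + (t + t')·z2 + (ψ(t)/t + ψ(t')/t')·z3 = 0 for all distinct t, t' ∈ G \ {0}. -/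
/-!
STATEMENT 14: Concurrency of the Denniston lines (Lemma 9 of the paper).  Let a
degree-`2d` maximal arc of Mathon type be given by an additive subgroup `G` of
order `2d` and additive maps `φ, ψ` satisfying the flock trace condition, and
suppose the sub-arc corresponding to an index-2 subgroup `H` of `G` is of
Denniston type (`φ(t) = α0·t`, `ψ(t) = β0·t` on `H`).  Then all Denniston lines
of the arc are concurrent: there is a nonzero `(z1,z2,z3)` with
`(φ(t)/t + φ(t')/t')·z1 + (t + t')·z2 + (ψ(t)/t + ψ(t')/t')·z3 = 0`
for all distinct nonzero `t, t' ∈ G`.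
-/

noncomputable section

/-!
Since `H` has index 2 in `G`, the map `t ↦ φ t - α0 t` is additive on `G` and vanishes
on `H`, so it takes one constant value `A` on the other coset `G \ H`; likewise `ψ t - β0 t`
takes a constant value `B` there. Hence, with `ε t = 0` on `H` and `ε t = t⁻¹` off `H`,
`φ t / t = α0 + A ε t` and `ψ t / t = β0 + B ε t`. In characteristic 2 the coefficients of the
Denniston line through `t, t'` become `(A w, t + t', B w)` with `w = ε t + ε t'`, and all these
lines pass through the point `(B, 0, -A)` (or `(1, 0, 0)` if `A = B = 0`).
-/

namespace AddSubgroup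

variable {M : Type*} [AddGroup M] {H K : AddSubgroup M}

theorem relIndex_eq_two_of_card_eq (hHK : H ≤ K) {d : ℕ} (hK : Nat.card K = 2 * d)
    (hH : Nat.card H = d) [Finite K] : H.relIndex K = 2 := by
  have hcard : Nat.card H * H.relIndex K = Nat.card K := by
    rw [← relIndex_bot_left, relIndex_mul_relIndex ⊥ H K bot_le hHK, relIndex_bot_left]
  have hd : 0 < d := by
    have : 0 < Nat.card K := Nat.card_pos
    omega
  rw [hH, hK, mul_comm 2] at hcard
  exact Nat.eq_of_mul_eq_mul_left hd hcard

theorem sub_mem_of_relIndex_eq_two (h : H.relIndex K = 2) {a b : M} (ha : a ∈ K) (haH : a ∉ H)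
    (hb : b ∈ K) (hbH : b ∉ H) : a - b ∈ H := by
  have hmem := (add_mem_iff_of_index_two (H := H.addSubgroupOf K) h
    (a := ⟨a, ha⟩) (b := -⟨b, hb⟩)).2
  simp only [mem_addSubgroupOf, coe_add, coe_neg, neg_mem_iff] at hmem
  rw [sub_eq_add_neg]
  exact hmem (iff_of_false haH hbH)

theorem map_eq_of_relIndex_eq_two {N : Type*} [AddMonoid N] {f : M → N}
    (hf : ∀ s ∈ K, ∀ t ∈ K, f (s + t) = f s + f t) (hfH : ∀ t ∈ H, f t = 0)
    (h : H.relIndex K = 2) {a b : M} (ha : a ∈ K) (haH : a ∉ H) (hb : b ∈ K) (hbH : b ∉ H) :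
    f a = f b := by
  have hab := sub_mem_of_relIndex_eq_two h ha haH hb hbH
  calc f a = f (a - b + b) := by rw [sub_add_cancel]
    _ = f b := by rw [hf _ (K.sub_mem ha hb) _ hb, hfH _ hab, zero_add]

end AddSubgroup

open AddSubgroup in
theorem exists_div_eq_add_mul_of_relIndex_eq_two {𝕜 : Type*} [Field 𝕜]
    {G H : AddSubgroup 𝕜} (hHG : H.relIndex G = 2) {φ : 𝕜 → 𝕜}
    (hφ : ∀ s ∈ G, ∀ t ∈ G, φ (s + t) = φ s + φ t) {α : 𝕜} (hα : ∀ t ∈ H, φ t = α * t) :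
    ∃ A : 𝕜, ∀ t ∈ G, t ≠ 0 → φ t / t = α + A * (H : Set 𝕜)ᶜ.indicator Inv.inv t := by
  obtain ⟨u, huG, huH, -⟩ := relIndex_eq_two_iff_exists_notMem_and.1 hHG
  refine ⟨φ u - α * u, fun t htG ht0 => ?_⟩
  by_cases htH : t ∈ H
  · rw [Set.indicator_of_notMem (not_not_intro htH), hα t htH, mul_div_cancel_right₀ _ ht0,
      mul_zero, add_zero]
  · rw [Set.indicator_of_mem htH]
    have hconst : φ t - α * t = φ u - α * u :=
      map_eq_of_relIndex_eq_two (f := fun t => φ t - α * t)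
        (fun s hs t ht => by simp only [hφ s hs t ht]; ring)
        (fun t ht => by simp only [hα t ht, sub_self]) hHG htG htH huG huH
    rw [← hconst]
    field_simp
    ring

theorem exists_ne_zero_forall_mul_add_mul_add_mul_eq_zero {R : Type*} [CommRing R] [Nontrivial R]
    (A B : R) : ∃ z : Fin 3 → R, z ≠ 0 ∧ ∀ w c : R, A * w * z 0 + c * z 1 + B * w * z 2 = 0 := by
  by_cases hAB : A = 0 ∧ B = 0
  · refine ⟨![1, 0, 0], fun hz => one_ne_zero (congrFun hz 0), fun w c => ?_⟩
    simp [hAB.1, hAB.2]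
  · refine ⟨![B, 0, -A], fun hz => hAB ⟨?_, ?_⟩, fun w c => ?_⟩
    · simpa using congrFun hz 2
    · simpa using congrFun hz 0
    · simp only [Matrix.cons_val_zero, Matrix.cons_val_one, Matrix.cons_val_two,
        Matrix.head_cons, Matrix.tail_cons]
      ring

theorem stmt14_general (h : ℕ) (d : ℕ)
    (G : AddSubgroup (F h)) (hG : Nat.card G = 2 * d)
    (φ ψ : F h → F h)
    (hφ : ∀ s ∈ G, ∀ t ∈ G, φ (s + t) = φ s + φ t)
    (hψ : ∀ s ∈ G, ∀ t ∈ G, ψ (s + t) = ψ s + ψ t)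
    (H : AddSubgroup (F h)) (hHG : H ≤ G) (hH : Nat.card H = d)
    (α0 β0 : F h)
    (hα0 : ∀ t ∈ H, φ t = α0 * t) (hβ0 : ∀ t ∈ H, ψ t = β0 * t) :
    ∃ z : Fin 3 → F h, z ≠ 0 ∧
      ∀ t ∈ G, ∀ t' ∈ G, t ≠ 0 → t' ≠ 0 → t ≠ t' →
        (φ t / t + φ t' / t') * z 0 + (t + t') * z 1 +
          (ψ t / t + ψ t' / t') * z 2 = 0 := by
  have hindex : H.relIndex G = 2 := AddSubgroup.relIndex_eq_two_of_card_eq hHG hG hH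
  obtain ⟨A, hA⟩ := exists_div_eq_add_mul_of_relIndex_eq_two hindex hφ hα0
  obtain ⟨B, hB⟩ := exists_div_eq_add_mul_of_relIndex_eq_two hindex hψ hβ0
  obtain ⟨z, hz0, hz⟩ := exists_ne_zero_forall_mul_add_mul_add_mul_eq_zero A B
  refine ⟨z, hz0, fun t ht t' ht' ht0 ht'0 _ => ?_⟩
  set w := (H : Set (F h))ᶜ.indicator Inv.inv t + (H : Set (F h))ᶜ.indicator Inv.inv t'
  have hφw : φ t / t + φ t' / t' = A * w := by
    rw [hA t ht ht0, hA t' ht' ht'0]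
    linear_combination CharTwo.add_self_eq_zero α0
  have hψw : ψ t / t + ψ t' / t' = B * w := by
    rw [hB t ht ht0, hB t' ht' ht'0]
    linear_combination CharTwo.add_self_eq_zero β0
  rw [hφw, hψw]
  exact hz w (t + t')

theorem stmt14 (h : ℕ) (hh : h ≠ 0) (d : ℕ) (hd : 2 ≤ d)
    (G : AddSubgroup (F h)) (hG : Nat.card G = 2 * d)
    (φ ψ : F h → F h)
    (hφ : ∀ s ∈ G, ∀ t ∈ G, φ (s + t) = φ s + φ t)
    (hψ : ∀ s ∈ G, ∀ t ∈ G, ψ (s + t) = ψ s + ψ t)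
    (htr : ∀ s ∈ G, ∀ t ∈ G, s ≠ t →
        Tr ((φ s + φ t) * (ψ s + ψ t) / (s + t) ^ 2) = 1)
    (H : AddSubgroup (F h)) (hHG : H ≤ G) (hH : Nat.card H = d)
    (α0 β0 : F h)
    (hα0 : ∀ t ∈ H, φ t = α0 * t) (hβ0 : ∀ t ∈ H, ψ t = β0 * t) :
    ∃ z : Fin 3 → F h, z ≠ 0 ∧
      ∀ t ∈ G, ∀ t' ∈ G, t ≠ 0 → t' ≠ 0 → t ≠ t' →
        (φ t / t + φ t' / t') * z 0 + (t + t') * z 1 +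
          (ψ t / t + ψ t' / t') * z 2 = 0 :=
  stmt14_general h d G hG φ ψ hφ hψ H hHG hH α0 β0 hα0 hβ0
end
end
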